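/- arXiv:math/0201320 — 6 statements merged into one kernel-verified Lean document; each statement's English description precedes it below -/
import Mathlib

section
/- Let k be a field of characteristic different from 2 and let λ ∈ k with λ ∉ {0, 1, -3}. Then the projective plane quartic C_λ given by x⁴ + y⁴ + z⁴ = (λ+1)(x²y² + y²z² + z²x²) is smooth: for every (x, y, z) in the algebraic closure of k at which the polynomial F = x⁴ + y⁴ + z⁴ - (λ+1)(x²y² + y²z² + z²x²) and all three of its partial derivatives ∂F/∂x, ∂F/∂y, ∂F/∂z vanish simultaneously, one has x = y = z = 0. -/
/-- For `λ ∉ {0, 1, -3}` in a field of characteristic different from 2, the plane quartic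
`C_λ : x⁴ + y⁴ + z⁴ = (λ+1)(x²y² + y²z² + z²x²)` is smooth: over the algebraic closure, the
quartic polynomial and its three partial derivatives vanish simultaneously only at the origin. -/
theorem smooth_quartic {k : Type*} [Field k] (h2 : (2 : k) ≠ 0) (lam : k)
    (h0 : lam ≠ 0) (h1 : lam ≠ 1) (h3 : lam ≠ -3)
    (x y z : AlgebraicClosure k)
    (hF : x ^ 4 + y ^ 4 + z ^ 4 =
      (algebraMap k (AlgebraicClosure k) lam + 1) *
        (x ^ 2 * y ^ 2 + y ^ 2 * z ^ 2 + z ^ 2 * x ^ 2))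
    (hFx : 4 * x ^ 3 =
      (algebraMap k (AlgebraicClosure k) lam + 1) * (2 * x * y ^ 2 + 2 * x * z ^ 2))
    (hFy : 4 * y ^ 3 =
      (algebraMap k (AlgebraicClosure k) lam + 1) * (2 * y * x ^ 2 + 2 * y * z ^ 2))
    (hFz : 4 * z ^ 3 =
      (algebraMap k (AlgebraicClosure k) lam + 1) * (2 * z * x ^ 2 + 2 * z * y ^ 2)) :
    x = 0 ∧ y = 0 ∧ z = 0 := by
  have hinj : Function.Injective (algebraMap k (AlgebraicClosure k)) :=
    (algebraMap k (AlgebraicClosure k)).injective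
  set μ : AlgebraicClosure k := algebraMap k (AlgebraicClosure k) lam + 1 with hμdef
  have h2K : (2 : AlgebraicClosure k) ≠ 0 := by
    intro h
    apply h2
    apply hinj
    rw [map_ofNat, map_zero]
    exact h
  have hμ1 : μ ≠ 1 := by
    intro h
    apply h0
    apply hinj
    rw [map_zero]
    linear_combination h
  have hμ2 : μ ≠ 2 := by
    intro h
    apply h1
    apply hinj
    rw [map_one]
    linear_combination h
  have hμ3 : μ ≠ -2 := by
    intro h
    apply h3
    apply hinj
    rw [map_neg, map_ofNat]
    linear_combination h
  have sq : ∀ a : AlgebraicClosure k, a ^ 2 = 0 → a = 0 := fun a h =>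
    pow_eq_zero_iff (two_ne_zero) |>.mp h
  have key : ∀ a b c : AlgebraicClosure k,
      4 * a ^ 3 = μ * (2 * a * b ^ 2 + 2 * a * c ^ 2) →
      a = 0 ∨ 2 * a ^ 2 = μ * (b ^ 2 + c ^ 2) := by
    intro a b c h
    have h' : (2 * a) * (2 * a ^ 2 - μ * (b ^ 2 + c ^ 2)) = 0 := by linear_combination h
    rcases mul_eq_zero.mp h' with h'' | h''
    · exact Or.inl ((mul_eq_zero.mp h'').resolve_left h2K)
    · exact Or.inr (by linear_combination h'')
  have pair : ∀ a b : AlgebraicClosure k,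
      2 * a ^ 2 = μ * b ^ 2 → 2 * b ^ 2 = μ * a ^ 2 → a = 0 ∧ b = 0 := by
    intro a b ha hb
    have h' : ((μ - 2) * (μ + 2)) * (a ^ 2 * b ^ 2) = 0 := by
      linear_combination (-2 * b ^ 2) * ha + (-μ * b ^ 2) * hb
    have hab : a ^ 2 * b ^ 2 = 0 := by
      rcases mul_eq_zero.mp h' with h'' | h''
      · rcases mul_eq_zero.mp h'' with h4 | h4
        · exact absurd (by linear_combination h4) hμ2
        · exact absurd (by linear_combination h4) hμ3
      · exact h''
    rcases mul_eq_zero.mp hab with h4 | h4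
    · have ha0 : a = 0 := sq a h4
      refine ⟨ha0, sq b ?_⟩
      have : 2 * b ^ 2 = 0 := by rw [ha0] at hb; linear_combination hb
      exact (mul_eq_zero.mp this).resolve_left h2K
    · have hb0 : b = 0 := sq b h4
      refine ⟨sq a ?_, hb0⟩
      have : 2 * a ^ 2 = 0 := by rw [hb0] at ha; linear_combination ha
      exact (mul_eq_zero.mp this).resolve_left h2K
  have single : ∀ a : AlgebraicClosure k,
      2 * a ^ 2 = μ * ((0 : AlgebraicClosure k) ^ 2 + (0 : AlgebraicClosure k) ^ 2) → a = 0 := by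
    intro a h
    have : 2 * a ^ 2 = 0 := by linear_combination h
    exact sq a ((mul_eq_zero.mp this).resolve_left h2K)
  rcases key x y z hFx with hx | hx <;>
    rcases key y x z (by linear_combination hFy) with hy | hy <;>
    rcases key z x y (by linear_combination hFz) with hz | hz
  · exact ⟨hx, hy, hz⟩
  · subst hx; subst hy
    exact ⟨rfl, rfl, single z (by linear_combination hz)⟩
  · subst hx; subst hz
    exact ⟨rfl, single y (by linear_combination hy), rfl⟩
  · subst hx
    obtain ⟨hy0, hz0⟩ := pair y z (by linear_combination hy) (by linear_combination hz)
    exact ⟨rfl, hy0, hz0⟩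
  · subst hy; subst hz
    exact ⟨single x (by linear_combination hx), rfl, rfl⟩
  · subst hy
    obtain ⟨hx0, hz0⟩ := pair x z (by linear_combination hx) (by linear_combination hz)
    exact ⟨hx0, rfl, hz0⟩
  · subst hz
    obtain ⟨hx0, hy0⟩ := pair x y (by linear_combination hx) (by linear_combination hy)
    exact ⟨hx0, hy0, rfl⟩
  · have e1 : (μ + 2) * (x ^ 2 - y ^ 2) = 0 := by linear_combination hx - hy
    have e2 : (μ + 2) * (y ^ 2 - z ^ 2) = 0 := by linear_combination hy - hz
    have hμ3' : μ + 2 ≠ 0 := fun h => hμ3 (by linear_combination h)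
    have exy : x ^ 2 = y ^ 2 := by
      have := (mul_eq_zero.mp e1).resolve_left hμ3'
      linear_combination this
    have eyz : y ^ 2 = z ^ 2 := by
      have := (mul_eq_zero.mp e2).resolve_left hμ3'
      linear_combination this
    have hx2 : 2 * (1 - μ) * x ^ 2 = 0 := by
      linear_combination hx - 2 * μ * exy - μ * eyz
    have hx0 : x = 0 := by
      rcases mul_eq_zero.mp hx2 with h' | h'
      · rcases mul_eq_zero.mp h' with h'' | h''
        · exact absurd h'' h2K
        · exact absurd (by linear_combination -h'') hμ1
      · exact sq x h'
    have hy0 : y = 0 := sq y (by rw [← exy, hx0]; ring)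
    have hz0 : z = 0 := sq z (by rw [← eyz, ← exy, hx0]; ring)
    exact ⟨hx0, hy0, hz0⟩
end

section
/- Let k be a field of characteristic different from 2. Let S and T be the invertible 3×3 matrices over k given by S = [[0,1,0],[0,0,1],[1,0,0]] (corresponding to (x,y,z) ↦ (y,z,x)) and T = [[0,1,0],[-1,0,0],[0,0,1]] (corresponding to (x,y,z) ↦ (y,-x,z)). Then the subgroup of the quotient group GL(3,k)/Z (where Z is the center of GL(3,k), consisting of the nonzero scalar matrices) generated by the images of S and T is isomorphic as a group to the symmetric group S₄ on 4 elements. -/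
namespace ClosureSymmFour

open Equiv Matrix

/-- Lookup table for the 3-dimensional representation of `S₄` (rotation group of the cube),
keyed by `(σ 0, σ 1, σ 2)`. -/
def tbl : Fin 4 → Fin 4 → Fin 4 → Matrix (Fin 3) (Fin 3) ℤ
  | 0, 1, 2 => !![1, 0, 0; 0, 1, 0; 0, 0, 1]
  | 0, 1, 3 => !![-1, 0, 0; 0, 0, -1; 0, -1, 0]
  | 0, 2, 1 => !![0, -1, 0; -1, 0, 0; 0, 0, -1]
  | 0, 2, 3 => !![0, 0, 1; 1, 0, 0; 0, 1, 0]
  | 0, 3, 1 => !![0, 1, 0; 0, 0, 1; 1, 0, 0]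
  | 0, 3, 2 => !![0, 0, -1; 0, -1, 0; -1, 0, 0]
  | 1, 0, 2 => !![-1, 0, 0; 0, 0, 1; 0, 1, 0]
  | 1, 0, 3 => !![1, 0, 0; 0, -1, 0; 0, 0, -1]
  | 1, 2, 0 => !![0, 1, 0; 0, 0, -1; -1, 0, 0]
  | 1, 2, 3 => !![0, 0, -1; 0, 1, 0; 1, 0, 0]
  | 1, 3, 0 => !![0, -1, 0; 1, 0, 0; 0, 0, 1]
  | 1, 3, 2 => !![0, 0, 1; -1, 0, 0; 0, -1, 0]
  | 2, 0, 1 => !![0, 0, -1; 1, 0, 0; 0, -1, 0]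
  | 2, 0, 3 => !![0, 1, 0; -1, 0, 0; 0, 0, 1]
  | 2, 1, 0 => !![0, 0, 1; 0, -1, 0; 1, 0, 0]
  | 2, 1, 3 => !![0, -1, 0; 0, 0, 1; -1, 0, 0]
  | 2, 3, 0 => !![-1, 0, 0; 0, 1, 0; 0, 0, -1]
  | 2, 3, 1 => !![1, 0, 0; 0, 0, -1; 0, 1, 0]
  | 3, 0, 1 => !![0, 0, 1; 0, 1, 0; -1, 0, 0]
  | 3, 0, 2 => !![0, -1, 0; 0, 0, -1; 1, 0, 0]
  | 3, 1, 0 => !![0, 0, -1; -1, 0, 0; 0, 1, 0]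
  | 3, 1, 2 => !![0, 1, 0; 1, 0, 0; 0, 0, -1]
  | 3, 2, 0 => !![1, 0, 0; 0, 0, 1; 0, -1, 0]
  | 3, 2, 1 => !![-1, 0, 0; 0, -1, 0; 0, 0, 1]
  | _, _, _ => 1

/-- The (faithful) 3-dimensional integral representation of `S₄`. -/
def psi0 (g : Equiv.Perm (Fin 4)) : Matrix (Fin 3) (Fin 3) ℤ := tbl (g 0) (g 1) (g 2)

def sigS : Equiv.Perm (Fin 4) := Equiv.swap 1 2 * Equiv.swap 1 3
def sigT : Equiv.Perm (Fin 4) := Equiv.swap 0 2 * Equiv.swap 2 3 * Equiv.swap 3 1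

theorem psi0_one : psi0 1 = 1 := by decide

set_option maxHeartbeats 8000000 in
theorem psi0_mul : ∀ g h : Equiv.Perm (Fin 4), psi0 (g * h) = psi0 g * psi0 h := by decide

theorem psi0_sigS : psi0 sigS = !![0, 1, 0; 0, 0, 1; 1, 0, 0] := by decide

theorem psi0_sigT : psi0 sigT = !![0, 1, 0; -1, 0, 0; 0, 0, 1] := by decide

set_option maxHeartbeats 8000000 in
theorem psi0_key : ∀ g : Equiv.Perm (Fin 4), g = 1 ∨ ∃ u ∈ [sigS, sigT], ∃ i j : Fin 3,
    (psi0 g * psi0 u) i j ≠ (psi0 u * psi0 g) i j ∧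
    ((psi0 g * psi0 u) i j).natAbs ≤ 1 ∧ ((psi0 u * psi0 g) i j).natAbs ≤ 1 := by decide

/-- `psi0` as a monoid hom. -/
def psiZ : Equiv.Perm (Fin 4) →* Matrix (Fin 3) (Fin 3) ℤ where
  toFun := psi0
  map_one' := psi0_one
  map_mul' := psi0_mul

variable (k : Type*) [Field k]

/-- The 3-dimensional representation of `S₄` over `k`, landing in `GL(3,k)`. -/
def psiGL : Equiv.Perm (Fin 4) →* GL (Fin 3) k :=
  (((Int.castRingHom k).mapMatrix.toMonoidHom).comp psiZ).toHomUnits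

theorem coe_psiGL (g : Equiv.Perm (Fin 4)) :
    (psiGL k g : Matrix (Fin 3) (Fin 3) k) = (Int.castRingHom k).mapMatrix (psi0 g) := by
  simp [psiGL, psiZ]

theorem closure_gen : Subgroup.closure ({sigS, sigT} : Set (Equiv.Perm (Fin 4))) = ⊤ := by
  set H := Subgroup.closure ({sigS, sigT} : Set (Equiv.Perm (Fin 4))) with hH
  have hs : sigS ∈ H := Subgroup.subset_closure (by simp)
  have ht : sigT ∈ H := Subgroup.subset_closure (by simp)
  have m01 : Equiv.swap (0 : Fin 4) 1 ∈ H := by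
    have h := mul_mem hs ht
    rwa [show sigS * sigT = Equiv.swap (0 : Fin 4) 1 from by decide] at h
  have m02 : Equiv.swap (0 : Fin 4) 2 ∈ H := by
    have h := mul_mem ht hs
    rwa [show sigT * sigS = Equiv.swap (0 : Fin 4) 2 from by decide] at h
  have m03 : Equiv.swap (0 : Fin 4) 3 ∈ H := by
    have h := mul_mem (mul_mem (mul_mem (mul_mem hs hs) ht) hs) hs
    rwa [show sigS * sigS * sigT * sigS * sigS = Equiv.swap (0 : Fin 4) 3 from by decide] at h
  have m12 : Equiv.swap (1 : Fin 4) 2 ∈ H := by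
    have h := mul_mem (mul_mem (mul_mem (mul_mem (mul_mem ht hs) hs) ht) ht) hs
    rwa [show sigT * sigS * sigS * sigT * sigT * sigS = Equiv.swap (1 : Fin 4) 2 from by decide]
      at h
  have m13 : Equiv.swap (1 : Fin 4) 3 ∈ H := by
    have h := mul_mem (mul_mem (mul_mem (mul_mem ht ht) hs) hs) ht
    rwa [show sigT * sigT * sigS * sigS * sigT = Equiv.swap (1 : Fin 4) 3 from by decide] at h
  have m23 : Equiv.swap (2 : Fin 4) 3 ∈ H := by
    have h := mul_mem (mul_mem (mul_mem (mul_mem ht hs) hs) ht) ht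
    rwa [show sigT * sigS * sigS * sigT * sigT = Equiv.swap (2 : Fin 4) 3 from by decide] at h
  have m10 : Equiv.swap (1 : Fin 4) 0 ∈ H := by rwa [Equiv.swap_comm]
  have m20 : Equiv.swap (2 : Fin 4) 0 ∈ H := by rwa [Equiv.swap_comm]
  have m30 : Equiv.swap (3 : Fin 4) 0 ∈ H := by rwa [Equiv.swap_comm]
  have m21 : Equiv.swap (2 : Fin 4) 1 ∈ H := by rwa [Equiv.swap_comm]
  have m31 : Equiv.swap (3 : Fin 4) 1 ∈ H := by rwa [Equiv.swap_comm]
  have m32 : Equiv.swap (3 : Fin 4) 2 ∈ H := by rwa [Equiv.swap_comm]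
  rw [eq_top_iff, ← Equiv.Perm.closure_isSwap, Subgroup.closure_le]
  rintro σ ⟨x, y, hxy, rfl⟩
  fin_cases x <;> fin_cases y <;>
    first
      | exact absurd rfl hxy
      | exact m01 | exact m02 | exact m03 | exact m12 | exact m13 | exact m23
      | exact m10 | exact m20 | exact m30 | exact m21 | exact m31 | exact m32

end ClosureSymmFour

open ClosureSymmFour in
/-- Over a field `k` of characteristic `≠ 2`, the subgroup of `PGL(3,k) = GL(3,k)/Z` generated
by the images of `S = [[0,1,0],[0,0,1],[1,0,0]]` (i.e. `(x,y,z) ↦ (y,z,x)`) and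
`T = [[0,1,0],[-1,0,0],[0,0,1]]` (i.e. `(x,y,z) ↦ (y,-x,z)`) is isomorphic to the symmetric
group `S₄` on 4 elements. -/
theorem closure_isom_symmFour {k : Type*} [Field k] (h2 : (2 : k) ≠ 0)
    (S T : GL (Fin 3) k)
    (hS : (S : Matrix (Fin 3) (Fin 3) k) = !![0, 1, 0; 0, 0, 1; 1, 0, 0])
    (hT : (T : Matrix (Fin 3) (Fin 3) k) = !![0, 1, 0; -1, 0, 0; 0, 0, 1]) :
    Nonempty ((Subgroup.closure
        ({QuotientGroup.mk S, QuotientGroup.mk T} :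
          Set (GL (Fin 3) k ⧸ Subgroup.center (GL (Fin 3) k)))) ≃* Equiv.Perm (Fin 4)) := by
  have cast_ne : ∀ a b : ℤ, a ≠ b → a.natAbs ≤ 1 → b.natAbs ≤ 1 → ((a : k) ≠ (b : k)) := by
    intro a b hne ha hb
    have ha' : a = -1 ∨ a = 0 ∨ a = 1 := by omega
    have hb' : b = -1 ∨ b = 0 ∨ b = 1 := by omega
    rcases ha' with rfl | rfl | rfl <;> rcases hb' with rfl | rfl | rfl <;>
      push_cast <;> intro hc <;>
      first
        | exact hne rfl
        | exact one_ne_zero hc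
        | exact one_ne_zero hc.symm
        | exact one_ne_zero (neg_eq_zero.mp hc)
        | exact one_ne_zero (neg_eq_zero.mp hc.symm)
        | exact h2 (by linear_combination hc)
        | exact h2 (by linear_combination -hc)
  let F : Equiv.Perm (Fin 4) →* GL (Fin 3) k ⧸ Subgroup.center (GL (Fin 3) k) :=
    (QuotientGroup.mk' _).comp (psiGL k)
  have hGLS : psiGL k sigS = S := by
    refine Units.ext ?_
    rw [coe_psiGL, hS, psi0_sigS, RingHom.mapMatrix_apply]
    ext i j
    fin_cases i <;> fin_cases j <;> simp [Matrix.map_apply, Matrix.vecHead, Matrix.vecTail]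
  have hGLT : psiGL k sigT = T := by
    refine Units.ext ?_
    rw [coe_psiGL, hT, psi0_sigT, RingHom.mapMatrix_apply]
    ext i j
    fin_cases i <;> fin_cases j <;> simp [Matrix.map_apply, Matrix.vecHead, Matrix.vecTail]
  have hFS : F sigS = QuotientGroup.mk S := by
    simp [F, hGLS]
  have hFT : F sigT = QuotientGroup.mk T := by
    simp [F, hGLT]
  have hinj : Function.Injective F := by
    rw [injective_iff_map_eq_one]
    intro g hg
    have hc : psiGL k g ∈ Subgroup.center (GL (Fin 3) k) :=
      (QuotientGroup.eq_one_iff _).mp hg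
    rcases psi0_key g with rfl | ⟨u, _, i, j, hne, ha, hb⟩
    · rfl
    exfalso
    have hcomm : psiGL k u * psiGL k g = psiGL k g * psiGL k u :=
      Subgroup.mem_center_iff.mp hc (psiGL k u)
    have hm : (Int.castRingHom k).mapMatrix (psi0 u * psi0 g) =
        (Int.castRingHom k).mapMatrix (psi0 g * psi0 u) := by
      rw [map_mul, map_mul, ← coe_psiGL, ← coe_psiGL, ← Units.val_mul, ← Units.val_mul, hcomm]
    have hentry := congrFun (congrFun hm i) j
    rw [RingHom.mapMatrix_apply, RingHom.mapMatrix_apply, Matrix.map_apply, Matrix.map_apply]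
      at hentry
    exact cast_ne _ _ hne.symm hb ha hentry
  have hrange : F.range = Subgroup.closure
      ({QuotientGroup.mk S, QuotientGroup.mk T} :
        Set (GL (Fin 3) k ⧸ Subgroup.center (GL (Fin 3) k))) := by
    rw [MonoidHom.range_eq_map, ← closure_gen, MonoidHom.map_closure, Set.image_pair, hFS, hFT]
  exact ⟨(MulEquiv.subgroupCongr hrange.symm).trans (MonoidHom.ofInjective hinj).symm⟩
end

section
/- Let F_q be a finite field of odd cardinality q and let λ ∈ F_q with λ ∉ {0, 1, -3}. Then the number of points [x : y : z] in the projective plane ℙ²(F_q) (nonzero triples (x,y,z) ∈ F_q³ up to scaling by F_q*) satisfying x⁴ + y⁴ + z⁴ = (λ+1)(x²y² + y²z² + z²x²) equals 3·#E_λ^{(λ+3)}(F_q) − 2q − 2, where #E_λ^{(λ+3)}(F_q) = 1 + #{(x,y) ∈ F_q² : (λ+3)y² = x(x−1)(x−λ)}. -/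
/-!
Writing `u = x², v = y², w = z²` and counting square roots with the quadratic character `χ`,
the affine cone over `C_λ` has `∑ (1 + χ u) (1 + χ v) (1 + χ w)` points, the sum running over the
zeros of the ternary quadratic form `Q = u² + v² + w² - (λ + 1)(uv + vw + wu)`. Rescaling by a
non-square kills the terms of odd degree, the constant term counts the `q²` zeros of `Q`, and the
three terms `χ (uv)`, `χ (vw)`, `χ (wu)` contribute equally by cyclic symmetry. Solving `Q = 0` for
`w` turns `∑_{Q = 0} χ (uv)` into `(q - 1) χ (λ + 3)` times a cubic character sum, which a
2-isogeny and a rescaling identify with `∑ χ (x (x - 1) (x - λ))`; the same sum counts the points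
of `E_λ^{(λ+3)}`. Dividing the affine count by `q - 1` gives the projective one.
-/

open Finset

theorem sum_comp_mul_left {F M : Type*} [GroupWithZero F] [Fintype F] [AddCommMonoid M] {c : F}
    (hc : c ≠ 0) (f : F → M) : ∑ x : F, f (c * x) = ∑ x : F, f x :=
  Fintype.sum_bijective _ (mulLeft_bijective₀ c hc) _ _ fun _ => rfl

theorem sum_ite_eq_zero {α : Type*} [Zero α] [Fintype α] [DecidableEq α] (a b : ℤ) :
    ∑ u : α, (if u = 0 then a else b) = a + (Fintype.card α - 1) * b := by
  rw [← add_sum_erase _ _ (mem_univ 0), if_pos rfl,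
    sum_congr rfl fun u hu => if_neg (ne_of_mem_erase hu), sum_const,
    card_erase_of_mem (mem_univ 0), card_univ, nsmul_eq_mul,
    Nat.cast_sub Fintype.card_pos, Nat.cast_one]

theorem sum_fin_three_arrow {α M : Type*} [Fintype α] [AddCommMonoid M]
    (f : (Fin 3 → α) → M) : ∑ v, f v = ∑ x : α, ∑ y : α, ∑ z : α, f ![x, y, z] := by
  rw [← (Fin.consEquiv fun _ => α).sum_comp, Fintype.sum_prod_type]
  refine sum_congr rfl fun x _ => ?_
  rw [← (Fin.consEquiv fun _ => α).sum_comp, Fintype.sum_prod_type]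
  refine sum_congr rfl fun y _ => ?_
  rw [← (Fin.consEquiv fun _ => α).sum_comp, Fintype.sum_prod_type]
  refine sum_congr rfl fun z _ => ?_
  rw [Fintype.sum_unique]
  congr 1

theorem Nat.card_subtype_eq_card_ne_zero_add_one {V : Type*} [Zero V] [Finite V] {p : V → Prop}
    (h : p 0) : Nat.card {v // p v} = Nat.card {v // v ≠ 0 ∧ p v} + 1 := by
  have hins : {v | p v} = insert 0 {v | v ≠ 0 ∧ p v} := by
    ext v
    by_cases hv : v = 0 <;> simp [hv, h]
  change Nat.card {v | p v} = Nat.card {v | v ≠ 0 ∧ p v} + 1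
  rw [Nat.card_coe_set_eq, Nat.card_coe_set_eq, hins,
    Set.ncard_insert_of_notMem (by simp) (Set.toFinite _)]

open scoped LinearAlgebra.Projectivization in
theorem Projectivization.card_subtype_rep {k V : Type*} [DivisionRing k] [AddCommGroup V]
    [Module k V] {p : V → Prop} (hp : ∀ (c : kˣ) (v : V), p (c • v) ↔ p v) :
    Nat.card {v : V // v ≠ 0 ∧ p v} = Nat.card {P : ℙ k V // p P.rep} * (Nat.card k - 1) := by
  have hrep : ∀ v : {v : V // v ≠ 0}, p v ↔ p (mk k v.1 v.2).rep := fun v => by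
    obtain ⟨a, ha⟩ := exists_smul_eq_mk_rep k v.1 v.2
    rw [← ha, hp]
  rw [← Nat.card_units, ← Nat.card_prod,
    Nat.card_congr ((Equiv.subtypeSubtypeEquivSubtypeInter (· ≠ 0) p).symm.trans
      (((nonZeroEquivProjectivizationProdUnits k V).subtypeEquiv
        (q := fun x => p x.1.rep) hrep).trans
        (Equiv.prodSubtypeFstEquivSubtypeProd (p := fun P : ℙ k V => p P.rep))))]

theorem ringChar_ne_two_of_odd_card {F : Type*} [Field F] [Fintype F]
    (h : Odd (Fintype.card F)) : ringChar F ≠ 2 := fun h2 => by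
  have := FiniteField.even_card_of_char_two h2
  rw [Nat.odd_iff] at h
  omega

section QuadraticCharSums

variable {F : Type*} [Field F] [Fintype F] [DecidableEq F]

local notation "χ" => quadraticChar F

theorem quadraticChar_sq_mul {s : F} (hs : s ≠ 0) (a : F) : χ (s ^ 2 * a) = χ a := by
  rw [map_mul, quadraticChar_sq_one' hs, one_mul]

theorem sum_quadraticChar_add (hF : ringChar F ≠ 2) (c : F) : ∑ x : F, χ (x + c) = 0 :=
  (Fintype.sum_equiv (Equiv.addRight c) _ _ fun _ => rfl).trans (quadraticChar_sum_zero hF)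

theorem card_filter_sq_eq (hF : ringChar F ≠ 2) (a : F) :
    (#{x : F | x ^ 2 = a} : ℤ) = χ a + 1 := by
  simpa [Set.toFinset_ofPred] using quadraticChar_card_sqrts hF a

theorem sum_comp_sq (hF : ringChar F ≠ 2) (f : F → ℤ) :
    ∑ x : F, f (x ^ 2) = ∑ u : F, (χ u + 1) * f u := by
  rw [← sum_fiberwise univ (· ^ 2) fun x => f (x ^ 2)]
  refine sum_congr rfl fun u _ => ?_
  rw [sum_congr rfl fun x hx => by rw [(mem_filter.mp hx).2], sum_const, nsmul_eq_mul,
    card_filter_sq_eq hF]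

theorem sum_comp_sq_three (hF : ringChar F ≠ 2) (G : F → F → F → ℤ) :
    ∑ x : F, ∑ y : F, ∑ z : F, G (x ^ 2) (y ^ 2) (z ^ 2) =
      ∑ u : F, ∑ v : F, ∑ w : F, (χ u + 1) * (χ v + 1) * (χ w + 1) * G u v w := by
  calc ∑ x : F, ∑ y : F, ∑ z : F, G (x ^ 2) (y ^ 2) (z ^ 2)
      = ∑ x : F, ∑ y : F, ∑ w : F, (χ w + 1) * G (x ^ 2) (y ^ 2) w :=
        sum_congr rfl fun x _ => sum_congr rfl fun y _ => sum_comp_sq hF _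
    _ = ∑ x : F, ∑ v : F, (χ v + 1) * ∑ w : F, (χ w + 1) * G (x ^ 2) v w :=
        sum_congr rfl fun x _ => sum_comp_sq hF fun v => ∑ w : F, (χ w + 1) * G (x ^ 2) v w
    _ = ∑ u : F, (χ u + 1) * ∑ v : F, (χ v + 1) * ∑ w : F, (χ w + 1) * G u v w :=
        sum_comp_sq hF fun u => ∑ v : F, (χ v + 1) * ∑ w : F, (χ w + 1) * G u v w
    _ = _ := by simp only [mul_sum, mul_assoc]

theorem card_filter_quadratic_eq_zero (hF : ringChar F ≠ 2) (b c : F) :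
    (#{x : F | x ^ 2 + b * x + c = 0} : ℤ) = χ (b ^ 2 - 4 * c) + 1 := by
  have h2 : (2 : F) ≠ 0 := Ring.two_ne_zero hF
  have h4 : (4 : F) ≠ 0 := by simpa [show (4 : F) = 2 * 2 by norm_num] using mul_ne_zero h2 h2
  rw [← card_filter_sq_eq hF,
    card_equiv ((Equiv.mulLeft₀ 2 h2).trans (Equiv.addRight b)) fun x => ?_]
  have hsq : (2 * x + b) ^ 2 - (b ^ 2 - 4 * c) = 4 * (x ^ 2 + b * x + c) := by ring
  simp [← sub_eq_zero (a := (2 * x + b) ^ 2), hsq, h4]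

theorem sum_quadraticChar_mul_sub (hF : ringChar F ≠ 2) {e : F} (he : e ≠ 0) :
    ∑ x : F, χ (x * (x - e)) = -1 := by
  have hscale : ∀ y, χ (e * y * (e * y - e)) = χ (-1) * (χ y * χ (1 - y)) := fun y => by
    rw [show e * y * (e * y - e) = e ^ 2 * (-1 * (y * (1 - y))) by ring, quadraticChar_sq_mul he,
      map_mul, map_mul]
  rw [← sum_comp_mul_left he, sum_congr rfl fun y _ => hscale y, ← mul_sum]
  have hJ : ∑ y : F, χ y * χ (1 - y) = -χ (-1) := by
    simpa [jacobiSum, (quadraticChar_isQuadratic F).inv] using jacobiSum_nontrivial_inv (quadraticChar_ne_one hF)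
  rw [hJ, mul_neg, ← sq, quadraticChar_sq_one (neg_ne_zero.mpr one_ne_zero)]

theorem sum_quadraticChar_sq_sub (hF : ringChar F ≠ 2) {e : F} (he : e ≠ 0) :
    ∑ x : F, χ (x ^ 2 - e) = -1 := by
  rw [sum_comp_sq hF fun u => χ (u - e)]
  simp only [add_mul, one_mul, ← map_mul, sum_add_distrib, sum_quadraticChar_mul_sub hF he]
  simpa only [sub_eq_add_neg, add_eq_left] using sum_quadraticChar_add hF (-e)

theorem sum_quadraticChar_sq : ∑ x : F, χ (x ^ 2) = Fintype.card F - 1 := by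
  have h : ∀ x : F, χ (x ^ 2) = 1 - if x = 0 then 1 else 0 := fun x => by
    by_cases hx : x = 0
    · simp [hx]
    · rw [quadraticChar_sq_one' hx, if_neg hx, sub_zero]
  simp [h, sum_sub_distrib]

theorem sum_quadraticChar_quadratic (hF : ringChar F ≠ 2) {a : F} (ha : a ≠ 0) (b c : F) :
    ∑ x : F, χ (a * x ^ 2 + b * x + c) =
      if b ^ 2 - 4 * a * c = 0 then χ a * (Fintype.card F - 1) else -χ a := by
  have h2a : 2 * a ≠ 0 := mul_ne_zero (Ring.two_ne_zero hF) ha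
  have hsq : ∀ x, χ (a * x ^ 2 + b * x + c) = χ a * χ ((2 * a * x + b) ^ 2 - (b ^ 2 - 4 * a * c)) :=
    fun x => by
      rw [← map_mul, ← quadraticChar_sq_mul h2a]
      congr 1
      ring
  rw [sum_congr rfl fun x _ => hsq x, ← mul_sum,
    Fintype.sum_equiv ((Equiv.mulLeft₀ (2 * a) h2a).trans (Equiv.addRight b))
      (fun x => χ ((2 * a * x + b) ^ 2 - (b ^ 2 - 4 * a * c)))
      (fun y => χ (y ^ 2 - (b ^ 2 - 4 * a * c))) fun _ => rfl]
  split_ifs with hd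
  · rw [hd, sum_congr rfl fun y _ => by rw [sub_zero], sum_quadraticChar_sq]
  · rw [sum_quadraticChar_sq_sub hF hd, mul_neg_one]

theorem card_filter_add_mul_inv_eq (hF : ringChar F ≠ 2) {b : F} (hb : b ≠ 0) (t : F) :
    (#{x ∈ univ.erase 0 | x + b * x⁻¹ = t} : ℤ) = χ (t ^ 2 - 4 * b) + 1 := by
  rw [← neg_sq t, ← card_filter_quadratic_eq_zero hF (-t) b]
  congr 2
  ext x
  simp only [mem_filter, mem_erase, mem_univ, and_true, true_and]
  constructor
  · rintro ⟨hx, rfl⟩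
    field_simp
    ring
  · intro h
    have hx : x ≠ 0 := by rintro rfl; simp [hb] at h
    refine ⟨hx, ?_⟩
    field_simp
    linear_combination h

theorem sum_quadraticChar_cubic_eq_isogenous (hF : ringChar F ≠ 2) {a b : F} (hb : b ≠ 0) :
    ∑ x : F, χ (x * (x ^ 2 + a * x + b)) =
      ∑ x : F, χ (x * (x ^ 2 - 2 * a * x + (a ^ 2 - 4 * b))) := by
  have hdiv : ∀ x ∈ univ.erase (0 : F), χ (x * (x ^ 2 + a * x + b)) = χ (x + b * x⁻¹ + a) :=
    fun x hx => by
      have hx0 : x ≠ 0 := ne_of_mem_erase hx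
      rw [← quadraticChar_sq_mul hx0 (x + b * x⁻¹ + a)]
      congr 1
      field_simp
      ring
  calc ∑ x : F, χ (x * (x ^ 2 + a * x + b))
      = ∑ x ∈ univ.erase 0, χ (x + b * x⁻¹ + a) := by
        rw [← sum_erase univ (f := fun x => χ (x * (x ^ 2 + a * x + b))) (a := 0) (by simp)]
        exact sum_congr rfl hdiv
    _ = ∑ t : F, (χ (t ^ 2 - 4 * b) + 1) * χ (t + a) := by
        rw [← sum_fiberwise (univ.erase 0) (fun x => x + b * x⁻¹)]
        refine sum_congr rfl fun t _ => ?_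
        rw [sum_congr rfl fun x hx => by rw [(mem_filter.mp hx).2], sum_const, nsmul_eq_mul,
          card_filter_add_mul_inv_eq hF hb]
    _ = ∑ t : F, χ ((t ^ 2 - 4 * b) * (t + a)) := by
        simp only [add_mul, one_mul, ← map_mul, sum_add_distrib, sum_quadraticChar_add hF, add_zero]
    _ = _ := Fintype.sum_equiv (Equiv.addRight a) _ _ fun t => by
        rw [Equiv.coe_addRight]
        congr 1
        ring

theorem sum_quadraticChar_eq_legendre (hF : ringChar F ≠ 2) {lam : F} (h1 : lam ≠ 1) :
    ∑ v : F, χ (v * ((lam - 1) * v ^ 2 + 2 * (lam + 1) * v + (lam - 1))) =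
      ∑ x : F, χ (x * (x - 1) * (x - lam)) := by
  have hl : lam - 1 ≠ 0 := sub_ne_zero.mpr h1
  have h4 : (4 : F) ≠ 0 := by
    simpa [show (4 : F) = 2 ^ 2 by norm_num] using pow_ne_zero 2 (Ring.two_ne_zero hF)
  have h8 : (8 : F) ≠ 0 := by
    simpa [show (8 : F) = 2 ^ 3 by norm_num] using pow_ne_zero 3 (Ring.two_ne_zero hF)
  calc ∑ v : F, χ (v * ((lam - 1) * v ^ 2 + 2 * (lam + 1) * v + (lam - 1)))
      = ∑ x : F, χ (x * (x ^ 2 + 2 * (lam + 1) * x + (lam - 1) ^ 2)) :=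
        (sum_congr rfl fun v _ => by
          rw [← quadraticChar_sq_mul hl]
          congr 1
          ring).trans (sum_comp_mul_left hl _)
    _ = ∑ x : F, χ (x * (x ^ 2 - 2 * (2 * (lam + 1)) * x +
          ((2 * (lam + 1)) ^ 2 - 4 * (lam - 1) ^ 2))) :=
        sum_quadraticChar_cubic_eq_isogenous hF (pow_ne_zero 2 hl)
    _ = ∑ x : F, χ (x * (x - 1) * (x - lam)) :=
        ((sum_congr rfl fun y _ => by
          rw [← quadraticChar_sq_mul h8]
          congr 1
          ring).trans (sum_comp_mul_left h4 _)).symm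

theorem card_twisted_curve (hF : ringChar F ≠ 2) {d : F} (hd : d ≠ 0) (f : F → F) :
    (Nat.card {p : F × F // d * p.2 ^ 2 = f p.1} : ℤ) =
      Fintype.card F + χ d * ∑ x : F, χ (f x) := by
  have hfiber : ∀ x, (#{y : F | d * y ^ 2 = f x} : ℤ) = 1 + χ d * χ (f x) := fun x => by
    rw [← map_mul, ← quadraticChar_sq_mul (inv_ne_zero hd), add_comm, ← card_filter_sq_eq hF]
    congr 2
    ext y
    simp only [mem_filter, mem_univ, true_and]
    constructor
    · intro h; rw [← h]; field_simp
    · intro h; rw [h]; field_simp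
  have hsum : #{p : F × F | d * p.2 ^ 2 = f p.1} = ∑ x : F, #{y : F | d * y ^ 2 = f x} := by
    simp only [card_filter, Fintype.sum_prod_type]
  rw [Nat.card_eq_fintype_card, Fintype.card_subtype, hsum]
  push_cast
  simp only [hfiber, sum_add_distrib, ← mul_sum, sum_const, card_univ, nsmul_eq_mul, mul_one]

end QuadraticCharSums

section TernaryForm

variable {R : Type*} [CommRing R]

def conic (lam u v w : R) : R := u ^ 2 + v ^ 2 + w ^ 2 - (lam + 1) * (u * v + v * w + w * u)

/-- The discriminant of `conic lam u v w` as a quadratic polynomial in `w`. -/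
def conicDisc (lam u v : R) : R :=
  (lam + 3) * ((lam - 1) * (u ^ 2 + v ^ 2) + 2 * (lam + 1) * (u * v))

theorem conic_rotate (lam u v w : R) : conic lam v w u = conic lam u v w := by
  unfold conic; ring

theorem conic_mul_left (lam c u v w : R) :
    conic lam (c * u) (c * v) (c * w) = c ^ 2 * conic lam u v w := by
  unfold conic; ring

def quartic (lam : R) (v : Fin 3 → R) : Prop :=
  v 0 ^ 4 + v 1 ^ 4 + v 2 ^ 4 =
    (lam + 1) * (v 0 ^ 2 * v 1 ^ 2 + v 1 ^ 2 * v 2 ^ 2 + v 2 ^ 2 * v 0 ^ 2)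

theorem quartic_iff_conic (lam : R) (v : Fin 3 → R) :
    quartic lam v ↔ conic lam (v 0 ^ 2) (v 1 ^ 2) (v 2 ^ 2) = 0 := by
  rw [quartic, conic, sub_eq_zero]; ring_nf

end TernaryForm

theorem quartic_units_smul {F : Type*} [Field F] (lam : F) (c : Fˣ) (v : Fin 3 → F) :
    quartic lam (c • v) ↔ quartic lam v := by
  simp [quartic_iff_conic, Units.smul_def, mul_pow, conic_mul_left]

section ConicSums

variable {F : Type*} [Field F] [Fintype F] [DecidableEq F]

local notation "χ" => quadraticChar F

def conicSum (lam : F) (g : F → F → F → ℤ) : ℤ :=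
  ∑ u : F, ∑ v : F, ∑ w : F, if conic lam u v w = 0 then g u v w else 0

theorem card_conic_roots (hF : ringChar F ≠ 2) (lam u v : F) :
    (#{w : F | conic lam u v w = 0} : ℤ) = χ (conicDisc lam u v) + 1 := by
  have hdisc : conicDisc lam u v =
      (-((lam + 1) * (u + v))) ^ 2 - 4 * (u ^ 2 + v ^ 2 - (lam + 1) * (u * v)) := by
    unfold conicDisc; ring
  rw [hdisc, ← card_filter_quadratic_eq_zero hF]
  congr 2
  exact filter_congr fun w _ => by rw [conic]; ring_nf

theorem conicSum_eq_sum_conicDisc (hF : ringChar F ≠ 2) (lam : F) (f : F → F → ℤ) :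
    conicSum lam (fun u v _ => f u v) = ∑ u : F, ∑ v : F, f u v * (χ (conicDisc lam u v) + 1) :=
  sum_congr rfl fun u _ => sum_congr rfl fun v _ => by
    rw [← sum_filter, sum_const, nsmul_eq_mul, card_conic_roots hF, mul_comm]

theorem conicSum_add (lam : F) (g h : F → F → F → ℤ) :
    conicSum lam (g + h) = conicSum lam g + conicSum lam h := by
  simp only [conicSum, Pi.add_apply, ite_add_zero, sum_add_distrib]

theorem conicSum_rotate (lam : F) (g : F → F → F → ℤ) :
    conicSum lam (fun u v w => g v w u) = conicSum lam g := by
  unfold conicSum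
  rw [sum_comm]
  refine sum_congr rfl fun v _ => ?_
  rw [sum_comm]
  exact sum_congr rfl fun w _ => sum_congr rfl fun u _ => by rw [conic_rotate lam u v w]

theorem conicSum_eq_zero_of_odd (lam : F) {c : F} (hc : c ≠ 0) {g : F → F → F → ℤ}
    (hg : ∀ u v w, g (c * u) (c * v) (c * w) = -g u v w) : conicSum lam g = 0 := by
  suffices conicSum lam g = -conicSum lam g by omega
  unfold conicSum
  simp only [← sum_neg_distrib]
  rw [← sum_comp_mul_left hc]
  refine sum_congr rfl fun u _ => ?_
  rw [← sum_comp_mul_left hc]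
  refine sum_congr rfl fun v _ => ?_
  rw [← sum_comp_mul_left hc]
  refine sum_congr rfl fun w _ => ?_
  simp only [conic_mul_left, mul_eq_zero, pow_eq_zero_iff two_ne_zero, hc, false_or, hg,
    apply_ite Neg.neg, neg_zero]

theorem sum_quadraticChar_conicDisc (hF : ringChar F ≠ 2) {lam : F} (h0 : lam ≠ 0)
    (h1 : lam ≠ 1) (h3 : lam + 3 ≠ 0) (u : F) :
    ∑ v : F, χ (conicDisc lam u v) =
      if u = 0 then χ ((lam + 3) * (lam - 1)) * (Fintype.card F - 1)
      else -χ ((lam + 3) * (lam - 1)) := by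
  have ha : (lam + 3) * (lam - 1) ≠ 0 := mul_ne_zero h3 (sub_ne_zero.mpr h1)
  have h16 : (16 : F) ≠ 0 := by
    simpa [show (16 : F) = 2 ^ 4 by norm_num] using pow_ne_zero 4 (Ring.two_ne_zero hF)
  have hshape : ∀ v, conicDisc lam u v = (lam + 3) * (lam - 1) * v ^ 2 +
      2 * (lam + 1) * (lam + 3) * u * v + (lam + 3) * (lam - 1) * u ^ 2 := fun v => by
    unfold conicDisc; ring
  have hdisc : (2 * (lam + 1) * (lam + 3) * u) ^ 2 -
      4 * ((lam + 3) * (lam - 1)) * ((lam + 3) * (lam - 1) * u ^ 2) =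
      16 * lam * (lam + 3) ^ 2 * u ^ 2 := by ring
  simp only [hshape, sum_quadraticChar_quadratic hF ha, hdisc, mul_eq_zero, h16, h0,
    pow_eq_zero_iff two_ne_zero, h3, false_or]

theorem conicSum_one (hF : ringChar F ≠ 2) {lam : F} (h0 : lam ≠ 0) (h1 : lam ≠ 1)
    (h3 : lam + 3 ≠ 0) : conicSum lam (fun _ _ _ => 1) = Fintype.card F ^ 2 := by
  rw [conicSum_eq_sum_conicDisc hF lam fun _ _ => 1]
  simp only [one_mul, sum_add_distrib, sum_quadraticChar_conicDisc hF h0 h1 h3, sum_ite_eq_zero,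
    sum_const, card_univ, nsmul_eq_mul, mul_one]
  ring

theorem conicSum_quadraticChar_mul (hF : ringChar F ≠ 2) {lam : F} (h1 : lam ≠ 1) :
    conicSum lam (fun u v _ => χ (u * v)) =
      (Fintype.card F - 1) * (χ (lam + 3) * ∑ x : F, χ (x * (x - 1) * (x - lam))) := by
  have hline : ∀ u, ∑ v : F, χ (u * v * conicDisc lam u v) =
      if u = 0 then 0 else χ (lam + 3) * ∑ x : F, χ (x * (x - 1) * (x - lam)) := fun u => by
    split_ifs with hu
    · simp [hu]
    rw [← sum_quadraticChar_eq_legendre hF h1, mul_sum, ← sum_comp_mul_left hu]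
    refine sum_congr rfl fun v _ => ?_
    conv_rhs => rw [← map_mul, ← quadraticChar_sq_mul (pow_ne_zero 2 hu)]
    congr 1
    unfold conicDisc
    ring
  have hcross : ∑ u : F, ∑ v : F, χ (u * v) = 0 := by
    simp only [map_mul, ← mul_sum, quadraticChar_sum_zero hF, mul_zero, sum_const_zero]
  rw [conicSum_eq_sum_conicDisc hF lam fun u v => χ (u * v)]
  simp only [mul_add, mul_one, ← map_mul, sum_add_distrib, hline, sum_ite_eq_zero, hcross,
    zero_add, add_zero]

theorem card_quartic_eq_conicSum (hF : ringChar F ≠ 2) (lam : F) :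
    (Nat.card {v : Fin 3 → F // quartic lam v} : ℤ) =
      conicSum lam fun u v w => (χ u + 1) * (χ v + 1) * (χ w + 1) := by
  classical
  rw [Nat.card_eq_fintype_card, Fintype.card_subtype, card_filter, Nat.cast_sum,
    sum_fin_three_arrow]
  simp only [quartic_iff_conic, Matrix.cons_val,
    Nat.cast_ite, Nat.cast_one, Nat.cast_zero]
  rw [sum_comp_sq_three hF fun u v w => if conic lam u v w = 0 then 1 else 0]
  simp only [conicSum, mul_ite, mul_one, mul_zero]

theorem card_quartic (hF : ringChar F ≠ 2) {lam : F} (h0 : lam ≠ 0) (h1 : lam ≠ 1)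
    (h3 : lam + 3 ≠ 0) :
    (Nat.card {v : Fin 3 → F // quartic lam v} : ℤ) = Fintype.card F ^ 2 +
      3 * ((Fintype.card F - 1) * (χ (lam + 3) * ∑ x : F, χ (x * (x - 1) * (x - lam)))) := by
  obtain ⟨c, hc⟩ := quadraticChar_exists_neg_one hF
  have hc0 : c ≠ 0 := by rintro rfl; simp at hc
  have hexpand : (fun u v w => (χ u + 1) * (χ v + 1) * (χ w + 1)) =
      (fun _ _ _ => 1) + (fun u v _ => χ (u * v)) + (fun _ v w => χ (v * w)) +
        (fun u _ w => χ (w * u)) + (fun u v w => χ u + χ v + χ w + χ (u * v * w)) := by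
    funext u v w
    simp only [Pi.add_apply, map_mul]
    ring
  have hodd : conicSum lam (fun u v w => χ u + χ v + χ w + χ (u * v * w)) = 0 :=
    conicSum_eq_zero_of_odd lam hc0 fun u v w => by simp only [map_mul, hc]; ring
  have hvw : conicSum lam (fun _ v w => χ (v * w)) = conicSum lam (fun u v _ => χ (u * v)) :=
    conicSum_rotate lam _
  have hwu : conicSum lam (fun u _ w => χ (w * u)) = conicSum lam (fun u v _ => χ (u * v)) :=
    (conicSum_rotate lam fun u _ w => χ (w * u)).symm
  rw [card_quartic_eq_conicSum hF, hexpand, conicSum_add, conicSum_add, conicSum_add, conicSum_add,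
    hodd, hvw, hwu, conicSum_one hF h0 h1 h3, conicSum_quadraticChar_mul hF h1]
  ring

end ConicSums

/-- For odd `q` and `λ ∈ F_q`, `λ ∉ {0, 1, -3}`, the number of points of the plane quartic
`C_λ : x⁴ + y⁴ + z⁴ = (λ+1)(x²y² + y²z² + z²x²)` in `ℙ²(F_q)` equals
`3·#E_λ^{(λ+3)}(F_q) − 2q − 2`, where `#E_λ^{(λ+3)}(F_q)` is `1` plus the number of affine
solutions of `(λ+3)y² = x(x−1)(x−λ)`. -/
theorem quartic_count_eq {F : Type*} [Field F] [Fintype F] (hodd : Odd (Fintype.card F))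
    (lam : F) (h0 : lam ≠ 0) (h1 : lam ≠ 1) (h3 : lam ≠ -3) :
    (Nat.card {P : Projectivization F (Fin 3 → F) //
        P.rep 0 ^ 4 + P.rep 1 ^ 4 + P.rep 2 ^ 4 =
          (lam + 1) * (P.rep 0 ^ 2 * P.rep 1 ^ 2 + P.rep 1 ^ 2 * P.rep 2 ^ 2 +
            P.rep 2 ^ 2 * P.rep 0 ^ 2)} : ℤ) =
      3 * ((1 + Nat.card {p : F × F //
            (lam + 3) * p.2 ^ 2 = p.1 * (p.1 - 1) * (p.1 - lam)} : ℕ) : ℤ) -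
        2 * (Fintype.card F : ℤ) - 2 := by
  classical
  have hF := ringChar_ne_two_of_odd_card hodd
  have h3' : lam + 3 ≠ 0 := fun h => h3 (eq_neg_of_add_eq_zero_left h)
  have hq : 1 < Fintype.card F := Fintype.one_lt_card
  have haffine := card_quartic hF h0 h1 h3'
  rw [Nat.card_subtype_eq_card_ne_zero_add_one (p := quartic lam) (by simp [quartic]),
    Projectivization.card_subtype_rep (quartic_units_smul lam),
    Nat.card_eq_fintype_card (α := F)] at haffine
  change (Nat.card {P : Projectivization F (Fin 3 → F) // quartic lam P.rep} : ℤ) = _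
  push_cast [Nat.cast_sub hq.le] at haffine ⊢
  rw [card_twisted_curve hF h3' fun x => x * (x - 1) * (x - lam)]
  have hq1 : (Fintype.card F : ℤ) - 1 ≠ 0 := by omega
  apply mul_right_cancel₀ hq1
  linear_combination haffine
end

section
/- Let K be a field of characteristic different from 2 and let a, b, c ∈ K be pairwise distinct. Let E be the elliptic curve over K given by the Weierstrass equation y² = (x−a)(x−b)(x−c). Then E is a Legendre elliptic curve over K (i.e., there exists λ ∈ K with λ ≠ 0, λ ≠ 1 such that E is isomorphic over K, via a Weierstrass change of variables over K, to the curve E_λ : y² = x(x−1)(x−λ)) if and only if at least one of the six elements a−b, b−a, b−c, c−b, c−a, a−c is a square in K*. -/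
/-- The Legendre elliptic curve `E_λ : y² = x(x−1)(x−λ)` as a Weierstrass curve. -/
def legendreCurve {K : Type*} [CommRing K] (lam : K) : WeierstrassCurve K :=
  { a₁ := 0, a₂ := -(1 + lam), a₃ := 0, a₄ := lam, a₆ := 0 }

private lemma sq_or_sq {K : Type*} [Field K] {v lam α β : K}
    (h1 : (1 + lam) * v ^ 2 = α + β) (h2 : lam * v ^ 4 = α * β) :
    IsSquare α ∨ IsSquare β := by
  have key : (v ^ 2 - α) * (v ^ 2 - β) = 0 := by linear_combination v ^ 2 * h1 - h2
  rcases mul_eq_zero.1 key with h | h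
  · exact Or.inl ⟨v, by linear_combination -h⟩
  · exact Or.inr ⟨v, by linear_combination -h⟩

private lemma exists_of_sq {K : Type*} [Field K] (a b c : K)
    (hba : b ≠ a) (hca : c ≠ a) (hcb : c ≠ b) (hsq : IsSquare (b - a)) :
    ∃ lam : K, lam ≠ 0 ∧ lam ≠ 1 ∧ ∃ e : WeierstrassCurve.VariableChange K, e •
      ({ a₁ := 0, a₂ := -(a + b + c), a₃ := 0, a₄ := a * b + b * c + c * a,
          a₆ := -(a * b * c) } : WeierstrassCurve K) = legendreCurve lam := by
  obtain ⟨s, hs⟩ := hsq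
  have hs0 : s ≠ 0 := by
    rintro rfl
    exact sub_ne_zero.mpr hba (by linear_combination hs)
  have hb : b = a + s * s := by linear_combination hs
  subst hb
  have hca' : c - a ≠ 0 := sub_ne_zero.mpr hca
  refine ⟨(c - a) / (s * s), div_ne_zero hca' (mul_ne_zero hs0 hs0), ?_,
    ⟨Units.mk0 s hs0, a, 0, 0⟩, ?_⟩
  · intro h
    rw [div_eq_one_iff_eq (mul_ne_zero hs0 hs0)] at h
    exact hcb (by linear_combination h)
  · rw [legendreCurve, WeierstrassCurve.ext_iff]
    simp only [WeierstrassCurve.variableChange_a₁, WeierstrassCurve.variableChange_a₂,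
      WeierstrassCurve.variableChange_a₃, WeierstrassCurve.variableChange_a₄,
      WeierstrassCurve.variableChange_a₆, Units.val_inv_eq_inv_val, Units.val_mk0]
    refine ⟨?_, ?_, ?_, ?_, ?_⟩ <;> field_simp <;> ring

/-- The elliptic curve `y² = (x−a)(x−b)(x−c)` (with `a, b, c ∈ K` pairwise distinct, `char K ≠ 2`)
is a Legendre elliptic curve over `K`, i.e. isomorphic over `K` via an admissible change of
Weierstrass variables to some `E_λ : y² = x(x−1)(x−λ)` with `λ ≠ 0, 1`, if and only if at least
one of `±(a−b), ±(b−c), ±(c−a)` is a square in `K*`. -/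
theorem legendre_iff_square {K : Type*} [Field K] (h2 : (2 : K) ≠ 0) (a b c : K)
    (hab : a ≠ b) (hbc : b ≠ c) (hca : c ≠ a) :
    (∃ lam : K, lam ≠ 0 ∧ lam ≠ 1 ∧ ∃ e : WeierstrassCurve.VariableChange K, e •
        ({ a₁ := 0, a₂ := -(a + b + c), a₃ := 0, a₄ := a * b + b * c + c * a,
            a₆ := -(a * b * c) } : WeierstrassCurve K) = legendreCurve lam) ↔
      (IsSquare (a - b) ∨ IsSquare (b - a) ∨ IsSquare (b - c) ∨ IsSquare (c - b) ∨
        IsSquare (c - a) ∨ IsSquare (a - c)) := by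
  constructor
  · rintro ⟨lam, h0, h1, ⟨u, r, s, t⟩, he⟩
    rw [legendreCurve, WeierstrassCurve.ext_iff] at he
    simp only [WeierstrassCurve.variableChange_a₁, WeierstrassCurve.variableChange_a₂,
      WeierstrassCurve.variableChange_a₃, WeierstrassCurve.variableChange_a₄,
      WeierstrassCurve.variableChange_a₆] at he
    obtain ⟨e1, e2, e3, e4, e6⟩ := he
    have hu : (u : K) ≠ 0 := u.ne_zero
    simp only [Units.val_inv_eq_inv_val] at e1 e2 e3 e4 e6
    have hs : s = 0 := by
      rcases mul_eq_zero.mp e1 with h | h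
      · exact absurd h (inv_ne_zero hu)
      · rcases mul_eq_zero.mp (show (2 : K) * s = 0 by linear_combination h) with h' | h'
        · exact absurd h' h2
        · exact h'
    subst hs
    have ht : t = 0 := by
      rcases mul_eq_zero.mp e3 with h | h
      · exact absurd h (pow_ne_zero 3 (inv_ne_zero hu))
      · rcases mul_eq_zero.mp (show (2 : K) * t = 0 by linear_combination h) with h' | h'
        · exact absurd h' h2
        · exact h'
    subst ht
    field_simp at e2 e4 e6
    have key : (r - a) * ((r - b) * (r - c)) = 0 := by linear_combination e6
    rcases mul_eq_zero.1 key with h | h'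
    · rw [show r = a from by linear_combination h] at e2 e4
      have := sq_or_sq (v := (u : K)) (lam := lam) (α := b - a) (β := c - a)
        (by linear_combination e2) (by linear_combination -e4)
      tauto
    rcases mul_eq_zero.1 h' with h | h
    · rw [show r = b from by linear_combination h] at e2 e4
      have := sq_or_sq (v := (u : K)) (lam := lam) (α := a - b) (β := c - b)
        (by linear_combination e2) (by linear_combination -e4)
      tauto
    · rw [show r = c from by linear_combination h] at e2 e4
      have := sq_or_sq (v := (u : K)) (lam := lam) (α := a - c) (β := b - c)
        (by linear_combination e2) (by linear_combination -e4)
      tauto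
  · rintro (h | h | h | h | h | h)
    · have e : ({ a₁ := 0, a₂ := -(a + b + c), a₃ := 0, a₄ := a * b + b * c + c * a, a₆ := -(a * b * c) } : WeierstrassCurve K) = ({ a₁ := 0, a₂ := -(b + a + c), a₃ := 0, a₄ := b * a + a * c + c * b, a₆ := -(b * a * c) } : WeierstrassCurve K) := by
        rw [WeierstrassCurve.mk.injEq]; exact ⟨rfl, by ring, rfl, by ring, by ring⟩
      rw [e]; exact exists_of_sq b a c hab hbc.symm hca h
    · exact exists_of_sq a b c hab.symm hca hbc.symm h
    · have e : ({ a₁ := 0, a₂ := -(a + b + c), a₃ := 0, a₄ := a * b + b * c + c * a, a₆ := -(a * b * c) } : WeierstrassCurve K) = ({ a₁ := 0, a₂ := -(c + b + a), a₃ := 0, a₄ := c * b + b * a + a * c, a₆ := -(c * b * a) } : WeierstrassCurve K) := by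
        rw [WeierstrassCurve.mk.injEq]; exact ⟨rfl, by ring, rfl, by ring, by ring⟩
      rw [e]; exact exists_of_sq c b a hbc hca.symm hab h
    · have e : ({ a₁ := 0, a₂ := -(a + b + c), a₃ := 0, a₄ := a * b + b * c + c * a, a₆ := -(a * b * c) } : WeierstrassCurve K) = ({ a₁ := 0, a₂ := -(b + c + a), a₃ := 0, a₄ := b * c + c * a + a * b, a₆ := -(b * c * a) } : WeierstrassCurve K) := by
        rw [WeierstrassCurve.mk.injEq]; exact ⟨rfl, by ring, rfl, by ring, by ring⟩
      rw [e]; exact exists_of_sq b c a hbc.symm hab hca.symm h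
    · have e : ({ a₁ := 0, a₂ := -(a + b + c), a₃ := 0, a₄ := a * b + b * c + c * a, a₆ := -(a * b * c) } : WeierstrassCurve K) = ({ a₁ := 0, a₂ := -(a + c + b), a₃ := 0, a₄ := a * c + c * b + b * a, a₆ := -(a * c * b) } : WeierstrassCurve K) := by
        rw [WeierstrassCurve.mk.injEq]; exact ⟨rfl, by ring, rfl, by ring, by ring⟩
      rw [e]; exact exists_of_sq a c b hca hab.symm hbc h
    · have e : ({ a₁ := 0, a₂ := -(a + b + c), a₃ := 0, a₄ := a * b + b * c + c * a, a₆ := -(a * b * c) } : WeierstrassCurve K) = ({ a₁ := 0, a₂ := -(c + a + b), a₃ := 0, a₄ := c * a + a * b + b * c, a₆ := -(c * a * b) } : WeierstrassCurve K) := by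
        rw [WeierstrassCurve.mk.injEq]; exact ⟨rfl, by ring, rfl, by ring, by ring⟩
      rw [e]; exact exists_of_sq c a b hca.symm hbc hab.symm h
end

section
/- Let K be a field of characteristic different from 2, let K^sep be a separable closure of K with Galois group G_K = Gal(K^sep/K), and let a, b, c ∈ K be pairwise distinct. Let E be the elliptic curve over K given by y² = (x−a)(x−b)(x−c). Then the following are equivalent: (i) at least one of the six elements a−b, b−a, b−c, c−b, c−a, a−c is a square in K*; (ii) there exists a point P ∈ E(K^sep) of order exactly 4 (i.e., 4P = O and 2P ≠ O) such that for every σ ∈ G_K (acting on E(K^sep) coordinatewise through its action on K^sep) one has σ(P) ≠ −P. -/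
open WeierstrassCurve.Affine Polynomial

namespace SqFour

variable {F : Type*} [Field F]

def curve (a b c : F) : WeierstrassCurve.Affine F :=
  { a₁ := 0, a₂ := -(a + b + c), a₃ := 0, a₄ := a * b + b * c + c * a, a₆ := -(a * b * c) }

variable {W : WeierstrassCurve.Affine F} {a b c : F}

lemma some_eq_some {x₁ y₁ x₂ y₂ : F} (h₁ : W.Nonsingular x₁ y₁) (h₂ : W.Nonsingular x₂ y₂)
    (hx : x₁ = x₂) (hy : y₁ = y₂) : Point.some _ _ h₁ = Point.some _ _ h₂ := by
  subst hx; subst hy; rfl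

lemma eqn (hW : W = curve a b c) {x y : F} :
    W.Equation x y ↔ y ^ 2 = (x - a) * (x - b) * (x - c) := by
  subst hW
  rw [equation_iff]
  simp only [curve]
  constructor <;> intro h <;> linear_combination h

lemma negY_eq (hW : W = curve a b c) (x y : F) : W.negY x y = -y := by
  subst hW; simp [negY, curve]

lemma ns_of_ne (hW : W = curve a b c) (h2 : (2 : F) ≠ 0) {x y : F}
    (heq : W.Equation x y) (hy : y ≠ 0) : W.Nonsingular x y := by
  rw [nonsingular_iff']
  refine ⟨heq, Or.inr ?_⟩
  subst hW
  simp only [curve]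
  intro h
  have h' : 2 * y = 0 := by linear_combination h
  exact hy ((mul_eq_zero.mp h').resolve_left h2)

lemma ns_T (hW : W = curve a b c) (hab : a ≠ b) (hca : c ≠ a) : W.Nonsingular a 0 := by
  rw [nonsingular_iff']
  constructor
  · rw [eqn hW]; ring
  · subst hW
    simp only [curve]
    left
    intro h
    have : (a - b) * (a - c) = 0 := by linear_combination -h
    rcases mul_eq_zero.mp this with h' | h'
    · exact hab (by linear_combination h')
    · exact hca (by linear_combination -h')

lemma y_ne_negY (hW : W = curve a b c) (h2 : (2 : F) ≠ 0) {x y : F} (hy : y ≠ 0) :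
    y ≠ W.negY x y := by
  rw [negY_eq hW]
  intro h
  exact hy (by rcases mul_eq_zero.mp (show 2 * y = 0 by linear_combination h) with h' | h' <;>
    [exact absurd h' h2; exact h'])

lemma double [DecidableEq F] (hW : W = curve a b c) (h2 : (2 : F) ≠ 0) {u v : F}
    (hu : u ≠ 0) (hv : v ≠ 0) (huv : u + v ≠ 0)
    (hb : b = a - u ^ 2) (hc : c = a - v ^ 2)
    (h : W.Nonsingular (a + u * v) (u * v * (u + v))) (hT : W.Nonsingular a 0) :
    Point.some _ _ h + Point.some _ _ h = Point.some _ _ hT := by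
  have hy0 : u * v * (u + v) ≠ 0 := mul_ne_zero (mul_ne_zero hu hv) huv
  have hy : u * v * (u + v) ≠ W.negY (a + u * v) (u * v * (u + v)) := y_ne_negY hW h2 hy0
  rw [Point.add_self_of_Y_ne hy]
  apply some_eq_some
  · rw [addX, slope_of_Y_ne rfl hy, negY_eq hW]
    subst hW hb hc
    simp only [curve]
    rw [show u * v * (u + v) - -(u * v * (u + v)) = 2 * (u * v * (u + v)) by ring]
    field_simp
    ring
  · rw [addY, negY_eq hW, negAddY, addX, slope_of_Y_ne rfl hy, negY_eq hW]
    subst hW hb hc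
    simp only [curve]
    rw [show u * v * (u + v) - -(u * v * (u + v)) = 2 * (u * v * (u + v)) by ring]
    field_simp
    ring

lemma halve_x [DecidableEq F] (hW : W = curve a b c) (h2 : (2 : F) ≠ 0) {x y : F}
    (heq : y ^ 2 = (x - a) * (x - b) * (x - c)) (hy : y ≠ 0)
    (hX : W.addX x x (W.slope x x y y) = a) :
    (x - a) ^ 2 = (a - b) * (a - c) := by
  have hy' : y ≠ W.negY x y := y_ne_negY hW h2 hy
  rw [addX, slope_of_Y_ne rfl hy', negY_eq hW] at hX
  rw [show y - -y = 2 * y by ring] at hX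
  subst hW
  simp only [curve] at hX
  have h2y : 2 * y ≠ 0 := mul_ne_zero h2 hy
  field_simp at hX
  have key : ((x - a) ^ 2 - (a - b) * (a - c)) ^ 2 = 0 := by
    linear_combination hX + 4 * (2 * x - b - c) * heq
  have h0 := pow_eq_zero_iff (n := 2) (by norm_num) |>.mp key
  linear_combination h0

lemma baseChange_curve {K M : Type*} [Field K] [Field M] [Algebra K M] (a b c : K) :
    (curve a b c).baseChange M =
      curve (algebraMap K M a) (algebraMap K M b) (algebraMap K M c) := by
  simp only [WeierstrassCurve.baseChange, WeierstrassCurve.map, curve, map_neg, map_add,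
    map_mul, map_zero]

lemma curve_swap (a b c : F) : curve a b c = curve b a c := by
  simp only [curve, WeierstrassCurve.mk.injEq]
  refine ⟨trivial, by ring, trivial, by ring, by ring⟩

lemma curve_rot (a b c : F) : curve a b c = curve b c a := by
  simp only [curve, WeierstrassCurve.mk.injEq]
  refine ⟨trivial, by ring, trivial, by ring, by ring⟩

lemma exists_sqrt {M : Type*} [Field M] [IsSepClosed M] (h2 : (2 : M) ≠ 0) (z : M) :
    ∃ t : M, t ^ 2 = z := by
  rcases eq_or_ne z 0 with rfl | hz
  · exact ⟨0, by ring⟩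
  have hsep : (X ^ 2 - C z).Separable := by
    apply Polynomial.separable_X_pow_sub_C z _ hz
    simpa using h2
  obtain ⟨t, ht⟩ := IsSepClosed.exists_root (X ^ 2 - C z)
    (by rw [Polynomial.degree_X_pow_sub_C (by norm_num)]; norm_num) hsep
  refine ⟨t, ?_⟩
  have := ht
  rw [IsRoot.def, eval_sub, eval_pow, eval_X, eval_C, sub_eq_zero] at this
  exact this

lemma exists_conj_neg {K M : Type*} [Field K] [Field M] [Algebra K M] [Normal K M]
    {d : K} (hd : ¬ IsSquare d) (t : M) (ht : t ^ 2 = algebraMap K M d) :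
    ∃ σ : M ≃ₐ[K] M, σ t = -t := by
  have hirr : Irreducible (X ^ 2 - C d) :=
    X_pow_sub_C_irreducible_of_prime Nat.prime_two fun b hb => hd ⟨b, by rw [← hb]; ring⟩
  have haev : (Polynomial.aeval t) (X ^ 2 - C d) = 0 := by
    simp [ht]
  have hmin : minpoly K t = X ^ 2 - C d :=
    (minpoly.eq_of_irreducible_of_monic hirr haev (monic_X_pow_sub_C d two_ne_zero)).symm
  have halg : IsAlgebraic K t := ⟨X ^ 2 - C d, hirr.ne_zero, haev⟩
  obtain ⟨σ, hσ⟩ := minpoly.exists_algEquiv_of_root (x := -t) halg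
    (by rw [hmin]; simp [ht])
  refine ⟨σ, ?_⟩
  have : σ t = σ (-(-t)) := by ring_nf
  rw [this, map_neg, hσ]

lemma conj_sq {K M : Type*} [Field K] [Field M] [Algebra K M]
    (ρ : M ≃ₐ[K] M) (w : M) (e' : K) (hw : w ^ 2 = algebraMap K M e') :
    ρ w = w ∨ ρ w = -w := by
  have h1 : (ρ w) ^ 2 = w ^ 2 := by rw [← map_pow, hw, AlgEquiv.commutes]
  have : (ρ w - w) * (ρ w + w) = 0 := by linear_combination h1
  rcases mul_eq_zero.mp this with h | h
  · exact Or.inl (by linear_combination h)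
  · exact Or.inr (by linear_combination h)

lemma exists_conj_both {K M : Type*} [Field K] [Field M] [Algebra K M] [Normal K M]
    {d e : K} (hd : ¬ IsSquare d) (he : ¬ IsSquare e) {u v : M}
    (hu : u ^ 2 = algebraMap K M d) (hv : v ^ 2 = algebraMap K M e) :
    ∃ σ : M ≃ₐ[K] M, σ u = -u ∧ σ v = -v := by
  obtain ⟨σ, hσ⟩ := exists_conj_neg hd u hu
  obtain ⟨τ, hτ⟩ := exists_conj_neg he v hv
  rcases conj_sq σ v e hv with h | h
  · rcases conj_sq τ u d hu with h' | h'
    · refine ⟨σ.trans τ, ?_, ?_⟩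
      · show τ (σ u) = -u
        rw [hσ, map_neg, h']
      · show τ (σ v) = -v
        rw [h, hτ]
    · exact ⟨τ, h', hτ⟩
  · exact ⟨σ, hσ, h⟩

lemma fwd {K M : Type*} [Field K] [Field M] [Algebra K M] [IsSepClosed M] [DecidableEq M]
    (h2 : (2 : K) ≠ 0) (a b c : K) (hab : a ≠ b) (hbc : b ≠ c) (hca : c ≠ a)
    (E : WeierstrassCurve.Affine K) (hE : E = curve a b c)
    (u : K) (hu : u ^ 2 = a - b) :
    ∃ P : (E.baseChange M).Point, 4 • P = 0 ∧ 2 • P ≠ 0 ∧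
      ∀ σ : M ≃ₐ[K] M, Point.map (W' := E) σ.toAlgHom P ≠ -P := by
  have hA : Function.Injective (algebraMap K M) := (algebraMap K M).injective
  have h2M : (2 : M) ≠ 0 := by
    intro h
    exact h2 (hA (by rw [map_ofNat, map_zero]; exact h))
  set A := algebraMap K M with hAdef
  have hW : E.baseChange M = curve (A a) (A b) (A c) := by
    rw [hE]; exact baseChange_curve a b c
  obtain ⟨v, hv⟩ := exists_sqrt h2M (A a - A c)
  have hu' : (A u) ^ 2 = A a - A b := by rw [← map_pow, hu, map_sub]
  have hab' : A a ≠ A b := fun h => hab (hA h)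
  have hbc' : A b ≠ A c := fun h => hbc (hA h)
  have hca' : A c ≠ A a := fun h => hca (hA h)
  have hu0 : A u ≠ 0 := by
    intro h; rw [h] at hu'; exact hab' (by linear_combination -hu')
  have hv0 : v ≠ 0 := by
    intro h; rw [h] at hv; exact hca' (by linear_combination hv)
  have huv : A u + v ≠ 0 := by
    intro h
    have hv' : v = -(A u) := by linear_combination h
    rw [hv'] at hv
    exact hbc' (by linear_combination hu' - hv)
  have hb' : A b = A a - (A u) ^ 2 := by linear_combination hu'
  have hc' : A c = A a - v ^ 2 := by linear_combination hv
  have hy0 : A u * v * (A u + v) ≠ 0 := mul_ne_zero (mul_ne_zero hu0 hv0) huv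
  have heq : (E.baseChange M).toAffine.Equation (A a + A u * v) (A u * v * (A u + v)) := by
    rw [eqn hW, hb', hc']
    ring
  have hns : (E.baseChange M).toAffine.Nonsingular (A a + A u * v) (A u * v * (A u + v)) :=
    ns_of_ne hW h2M heq hy0
  have hT : (E.baseChange M).toAffine.Nonsingular (A a) 0 := ns_T hW hab' hca'
  have h2P : Point.some _ _ hns + Point.some _ _ hns = Point.some _ _ hT :=
    double hW h2M hu0 hv0 huv hb' hc' hns hT
  refine ⟨Point.some _ _ hns, ?_, ?_, ?_⟩
  · rw [show (4 : ℕ) = 2 * 2 from rfl, mul_smul, two_smul, two_smul, h2P]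
    exact Point.add_of_Y_eq rfl (by rw [negY_eq hW]; ring)
  · rw [two_smul, h2P]
    exact Point.some_ne_zero hT
  · intro σ hcon
    rw [Point.map_some, Point.neg_some] at hcon
    obtain ⟨hx, hy⟩ := Point.some.inj hcon
    have hσa : σ.toAlgHom (A a) = A a := σ.toAlgHom.commutes a
    have hσu : σ.toAlgHom (A u) = A u := σ.toAlgHom.commutes u
    rcases conj_sq σ v (a - c) (by rw [hv, map_sub]) with hσv | hσv
    · have hyy : σ.toAlgHom (A u * v * (A u + v)) = A u * v * (A u + v) := by
        show σ (A u * v * (A u + v)) = _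
        rw [map_mul, map_mul, map_add]
        show σ.toAlgHom (A u) * σ v * (σ.toAlgHom (A u) + σ v) = _
        rw [hσu, hσv]
      rw [hyy, negY_eq hW] at hy
      have : 2 * (A u * v * (A u + v)) = 0 := by linear_combination hy
      exact hy0 ((mul_eq_zero.mp this).resolve_left h2M)
    · have hxx : σ.toAlgHom (A a + A u * v) = A a - A u * v := by
        show σ (A a + A u * v) = _
        rw [map_add, map_mul]
        show σ.toAlgHom (A a) + σ.toAlgHom (A u) * σ v = _
        rw [hσa, hσu, hσv]
        ring
      rw [hxx] at hx
      have : 2 * (A u * v) = 0 := by linear_combination -hx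
      exact mul_ne_zero hu0 hv0 ((mul_eq_zero.mp this).resolve_left h2M)

lemma bwd {K M : Type*} [Field K] [Field M] [Algebra K M] [IsSepClosed M] [Normal K M] [DecidableEq M]
    (h2 : (2 : K) ≠ 0) (a b c : K) (hab : a ≠ b) (hbc : b ≠ c) (hca : c ≠ a)
    (E : WeierstrassCurve.Affine K) (hE : E = curve a b c)
    (hd : ¬ IsSquare (a - b)) (he : ¬ IsSquare (a - c))
    {x y : M} (hns : (E.baseChange M).toAffine.Nonsingular x y) (hy : y ≠ 0)
    (hX : (E.baseChange M).toAffine.addX x x ((E.baseChange M).toAffine.slope x x y y) =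
      algebraMap K M a) :
    ∃ σ : M ≃ₐ[K] M, Point.map (W' := E) σ.toAlgHom (Point.some _ _ hns) = -(Point.some _ _ hns) := by
  have hA : Function.Injective (algebraMap K M) := (algebraMap K M).injective
  have h2M : (2 : M) ≠ 0 := by
    intro h
    exact h2 (hA (by rw [map_ofNat, map_zero]; exact h))
  set A := algebraMap K M with hAdef
  have hW : E.baseChange M = curve (A a) (A b) (A c) := by
    rw [hE]; exact baseChange_curve a b c
  have heq : y ^ 2 = (x - A a) * (x - A b) * (x - A c) := (eqn hW).mp hns.1
  have hx2 : (x - A a) ^ 2 = (A a - A b) * (A a - A c) := halve_x hW h2M heq hy hX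
  obtain ⟨u, hu⟩ := exists_sqrt h2M (A a - A b)
  obtain ⟨w, hw⟩ := exists_sqrt h2M (A a - A c)
  -- choose sign of w so that x = A a + u * w'
  have hfac : (x - A a - u * w) * (x - A a + u * w) = 0 := by
    rw [← hu, ← hw] at hx2
    linear_combination hx2
  obtain ⟨v, hv, hxv⟩ : ∃ v : M, v ^ 2 = A a - A c ∧ x = A a + u * v := by
    rcases mul_eq_zero.mp hfac with h | h
    · exact ⟨w, hw, by linear_combination h⟩
    · exact ⟨-w, by rw [neg_pow]; simpa using hw, by linear_combination h⟩
  have hu'' : u ^ 2 = A (a - b) := by rw [map_sub]; exact hu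
  have hv'' : v ^ 2 = A (a - c) := by rw [map_sub]; exact hv
  obtain ⟨σ, hσu, hσv⟩ := exists_conj_both hd he hu'' hv''
  -- y = ± u v (u + v)
  have hyfac : (y - u * v * (u + v)) * (y + u * v * (u + v)) = 0 := by
    rw [hxv] at heq
    have hb' : A b = A a - u ^ 2 := by linear_combination hu
    have hc' : A c = A a - v ^ 2 := by linear_combination hv
    rw [hb', hc'] at heq
    linear_combination heq
  have hσx : σ x = x := by
    rw [hxv, map_add, map_mul, hσu, hσv, AlgEquiv.commutes]
    ring
  have hσy : σ y = -y := by
    have hσw : σ (u * v * (u + v)) = -(u * v * (u + v)) := by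
      rw [map_mul, map_mul, map_add, hσu, hσv]
      ring
    rcases mul_eq_zero.mp hyfac with h | h
    · have hy' : y = u * v * (u + v) := by linear_combination h
      rw [hy', hσw]
    · have hy' : y = -(u * v * (u + v)) := by linear_combination h
      rw [hy', map_neg, hσw]
  refine ⟨σ, ?_⟩
  rw [Point.map_some, Point.neg_some]
  exact some_eq_some _ _ hσx (by rw [negY_eq hW]; exact hσy)

end SqFour
open scoped Classical in
/-- Let `E : y² = (x−a)(x−b)(x−c)` with `a, b, c ∈ K` pairwise distinct, `char K ≠ 2`.
Then one of `±(a−b), ±(b−c), ±(c−a)` is a square in `K*` if and only if there exists a point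
`P ∈ E(K^sep)` of order exactly 4 such that `σ(P) ≠ −P` for every `σ ∈ Gal(K^sep/K)`. -/
theorem square_iff_four_torsion {K : Type*} [Field K] (h2 : (2 : K) ≠ 0) (a b c : K)
    (hab : a ≠ b) (hbc : b ≠ c) (hca : c ≠ a)
    (E : WeierstrassCurve.Affine K)
    (hE : E = { a₁ := 0, a₂ := -(a + b + c), a₃ := 0, a₄ := a * b + b * c + c * a,
                a₆ := -(a * b * c) }) :
    (IsSquare (a - b) ∨ IsSquare (b - a) ∨ IsSquare (b - c) ∨ IsSquare (c - b) ∨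
        IsSquare (c - a) ∨ IsSquare (a - c)) ↔
      ∃ P : (E.baseChange ↥(separableClosure K (AlgebraicClosure K))).Point, 4 • P = 0 ∧ 2 • P ≠ 0 ∧
        ∀ σ : ↥(separableClosure K (AlgebraicClosure K)) ≃ₐ[K]
            ↥(separableClosure K (AlgebraicClosure K)),
          Point.map (W' := E) σ.toAlgHom P ≠ -P := by
  haveI : IsSepClosed ↥(separableClosure K (AlgebraicClosure K)) :=
    (separableClosure.isSepClosure K (AlgebraicClosure K)).sep_closed
  have hE' : E = SqFour.curve a b c := hE
  constructor
  · rintro (h | h | h | h | h | h) <;> obtain ⟨r, hr⟩ := h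
    · exact SqFour.fwd h2 a b c hab hbc hca E hE' r (by linear_combination -hr)
    · exact SqFour.fwd h2 b a c hab.symm hca.symm hbc.symm E
        (hE'.trans (SqFour.curve_swap a b c)) r (by linear_combination -hr)
    · exact SqFour.fwd h2 b c a hbc hca hab E
        (hE'.trans (SqFour.curve_rot a b c)) r (by linear_combination -hr)
    · exact SqFour.fwd h2 c b a hbc.symm hab.symm hca.symm E
        (hE'.trans ((SqFour.curve_rot a b c).trans (SqFour.curve_swap b c a))) r
        (by linear_combination -hr)
    · exact SqFour.fwd h2 c a b hca hab hbc E
        (hE'.trans ((SqFour.curve_rot a b c).trans (SqFour.curve_rot b c a))) r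
        (by linear_combination -hr)
    · exact SqFour.fwd h2 a c b hca.symm hbc.symm hab.symm E
        (hE'.trans (((SqFour.curve_rot a b c).trans (SqFour.curve_rot b c a)).trans
          (SqFour.curve_swap c a b))) r (by linear_combination -hr)
  · rintro ⟨P, h4, h2', hσ⟩
    by_contra hns
    push_neg at hns
    obtain ⟨n1, n2, n3, n4, n5, n6⟩ := hns
    set M := ↥(separableClosure K (AlgebraicClosure K))
    set A := algebraMap K M with hAdef
    have hA : Function.Injective A := A.injective
    have h2M : (2 : M) ≠ 0 := by
      intro h
      exact h2 (hA (by rw [hAdef, map_ofNat, map_zero]; exact h))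
    have hW : E.baseChange M = SqFour.curve (A a) (A b) (A c) := by
      rw [hE']; exact SqFour.baseChange_curve a b c
    cases P with
    | zero =>
      exact h2' (by rw [← Point.zero_def, smul_zero])
    | @some x y hPns =>
      have hyne : y ≠ (E.baseChange M).toAffine.negY x y := by
        intro h
        exact h2' (by rw [two_smul, Point.add_of_Y_eq rfl h])
      have hy0 : y ≠ 0 := by
        intro h
        apply hyne
        rw [h, SqFour.negY_eq hW]
        ring
      have hQ : Point.some _ _ hPns + Point.some _ _ hPns =
          Point.some _ _ (nonsingular_add hPns hPns fun hxy => hyne hxy.2) := by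
        rw [Point.add_self_of_Y_ne hyne]
      have h4' : Point.some _ _ (nonsingular_add hPns hPns fun hxy => hyne hxy.2) +
          Point.some _ _ (nonsingular_add hPns hPns fun hxy => hyne hxy.2) = 0 := by
        have h44 : (4 : ℕ) • (Point.some _ _ hPns : (E.baseChange ↥(separableClosure K (AlgebraicClosure K))).Point) =
            Point.some _ _ (nonsingular_add hPns hPns fun hxy => hyne hxy.2) +
            Point.some _ _ (nonsingular_add hPns hPns fun hxy => hyne hxy.2) := by
          rw [show (4 : ℕ) = 2 * 2 from rfl, mul_smul, two_smul, two_smul, hQ]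
        rw [← h44]
        exact h4
      set W := (E.baseChange M).toAffine with hWdef
      set X₂ := W.addX x x (W.slope x x y y) with hX2
      set Y₂ := W.addY x x y (W.slope x x y y) with hY2
      have hY₂ : Y₂ = W.negY X₂ Y₂ := by
        by_contra hY
        rw [Point.add_self_of_Y_ne hY] at h4'
        exact Point.some_ne_zero _ h4'
      have hY0 : Y₂ = 0 := by
        rw [SqFour.negY_eq hW] at hY₂
        rcases mul_eq_zero.mp (show 2 * Y₂ = 0 by linear_combination hY₂) with h | h
        · exact absurd h h2M
        · exact h
      have heqQ : Y₂ ^ 2 = (X₂ - A a) * (X₂ - A b) * (X₂ - A c) :=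
        (SqFour.eqn hW).mp (nonsingular_add hPns hPns fun hxy => hyne hxy.2).1
      rw [hY0] at heqQ
      have hzero : (X₂ - A a) * (X₂ - A b) * (X₂ - A c) = 0 := by linear_combination -heqQ
      rcases mul_eq_zero.mp hzero with h | h
      · rcases mul_eq_zero.mp h with h' | h'
        · obtain ⟨σ, hσ'⟩ := SqFour.bwd h2 a b c hab hbc hca E hE' n1 n6 hPns hy0
            (sub_eq_zero.mp h')
          exact hσ σ hσ'
        · obtain ⟨σ, hσ'⟩ := SqFour.bwd h2 b a c hab.symm hca.symm hbc.symm E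
            (hE'.trans (SqFour.curve_swap a b c)) n2 n3 hPns hy0 (sub_eq_zero.mp h')
          exact hσ σ hσ'
      · obtain ⟨σ, hσ'⟩ := SqFour.bwd h2 c a b hca hab hbc E
          (hE'.trans ((SqFour.curve_rot a b c).trans (SqFour.curve_rot b c a))) n5 n4 hPns hy0
          (sub_eq_zero.mp h)
        exact hσ σ hσ'
end

section
/- Let n be a positive integer with n ≡ 2 (mod 4), let q = 3ⁿ, and let F_q be a finite field with q elements. Then there exists λ ∈ F_q with λ ≠ 0, λ ≠ 1 such that the Legendre elliptic curve E_λ : y² = x(x−1)(x−λ) satisfies #E_λ(F_q) = q + 1 + 2·3^{n/2}; that is, E_λ attains the Hasse–Weil upper bound for elliptic curves over F_q. -/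
/-!
Take `λ = -1`, so that the curve is `y² = x³ - x`. In characteristic `3` the map
`℘ x = x³ - x` is additive with kernel `𝔽₃`, so the curve has `3 · #{y | y² ∈ ℘(F)}` affine
points. Let `σ = x ↦ x ^ 3 ^ (n/2)`, an involution of `F` with fixed field `K` of order `3 ^ (n/2)`,
and `τ = id + σ : F → K`. Then `℘(F) = τ⁻¹(℘(K))`: `τ` commutes with `℘`, and both sides have
index `3`. Since `3 ^ (n/2) ≡ 3 (mod 4)`, a square root `i` of `-1` satisfies `σ i = -i`, and
`y ↦ (τ((1 - i) y), τ((1 + i) y))` identifies `F` with `K × K` and turns `τ(y²)` into `-uv`.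
Counting the pairs with `uv ∈ ℘(K)`, a subgroup of order `|K| / 3`, gives
`3 (|K| + (|K| - 1) |K| / 3) = |K|² + 2 |K|` affine points.
-/

namespace AddMonoidHom

variable {A B C : Type*} [AddGroup A] [AddGroup B]

lemma card_fiber_of_mem_range (f : A →+ B) {b : B} (hb : b ∈ f.range) :
    Nat.card {a // f a = b} = Nat.card f.ker := by
  obtain ⟨a, rfl⟩ := hb
  exact Nat.card_congr (f.fiberEquivKer a)

lemma card_eq_card_ker_mul_card_mem_range [Finite A] [Finite C] (f : A →+ B) (g : C → B) :
    Nat.card {p : A × C // f p.1 = g p.2} = Nat.card f.ker * Nat.card {c // g c ∈ f.range} := by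
  have := Fintype.ofFinite {c // g c ∈ f.range}
  let e : {p : A × C // f p.1 = g p.2} ≃ Σ c : {c // g c ∈ f.range}, {a // f a = g c} :=
    { toFun p := ⟨⟨p.1.2, p.1.1, p.2⟩, p.1.1, p.2⟩
      invFun s := ⟨(s.2, s.1), s.2.2⟩
      left_inv _ := rfl
      right_inv _ := rfl }
  rw [Nat.card_congr e, Nat.card_sigma,
    Finset.sum_congr rfl fun c _ => f.card_fiber_of_mem_range c.2, Finset.sum_const, smul_eq_mul,
    mul_comm, Finset.card_univ, ← Nat.card_eq_fintype_card]

end AddMonoidHom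

lemma card_mul_mem_addSubgroup {K : Type*} [Field K] [Finite K] (P : AddSubgroup K) :
    Nat.card {w : K × K // w.1 * w.2 ∈ P} = Nat.card K + (Nat.card K - 1) * Nat.card P := by
  have := Fintype.ofFinite K
  have := Classical.decEq K
  have hfiber (u : K) : Nat.card {v // u * v ∈ P} = if u = 0 then Nat.card K else Nat.card P := by
    split_ifs with hu
    · subst hu
      simp only [zero_mul, zero_mem]
      exact Nat.card_congr (Equiv.subtypeUnivEquiv fun _ => trivial)
    · exact Nat.card_congr ((Equiv.mulLeft₀ u hu).subtypeEquiv fun _ => Iff.rfl)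
  rw [Nat.card_congr (Equiv.subtypeProdEquivSigmaSubtype fun u v => u * v ∈ P), Nat.card_sigma,
    Finset.sum_congr rfl fun u _ => hfiber u, Finset.sum_ite, Finset.sum_const, Finset.sum_const,
    Finset.filter_eq', Finset.filter_ne']
  simp [Nat.card_eq_fintype_card]

lemma pow_eq_neg_self_of_sq_eq_neg_one {R : Type*} [CommRing R] {i : R} (hi : i ^ 2 = -1)
    {k : ℕ} (hk : k % 4 = 3) : i ^ k = -i := by
  rw [← Nat.div_add_mod k 4, hk, pow_add, pow_mul,
    show i ^ 4 = 1 by linear_combination (i ^ 2 - 1) * hi, one_pow, one_mul]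
  linear_combination i * hi

section CharThree

lemma neg_one_ne_one_of_charP_three (R : Type*) [Ring R] [Nontrivial R] [CharP R 3] :
    (-1 : R) ≠ 1 :=
  Ring.neg_one_ne_one_of_char_ne_two (by rw [ringChar.eq R 3]; norm_num)

variable (R : Type*) [CommRing R] [CharP R 3]

def artinSchreier : R →+ R := (frobenius R 3).toAddMonoidHom - AddMonoidHom.id R

variable {R} in
lemma artinSchreier_apply (x : R) : artinSchreier R x = x ^ 3 - x := rfl

variable (K : Type*) [Field K] [CharP K 3]

lemma mem_ker_artinSchreier {x : K} : x ∈ (artinSchreier K).ker ↔ x = 0 ∨ x = 1 ∨ x = -1 := by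
  rw [AddMonoidHom.mem_ker, artinSchreier_apply,
    show x ^ 3 - x = x * ((x - 1) * (x + 1)) by ring]
  simp [sub_eq_zero, add_eq_zero_iff_eq_neg]

lemma card_ker_artinSchreier : Nat.card (artinSchreier K).ker = 3 := by
  have hker : ((artinSchreier K).ker : Set K) = {0, 1, -1} := by
    ext x
    exact mem_ker_artinSchreier K
  rw [← SetLike.coe_sort_coe, hker, Nat.card_coe_set_eq, Set.ncard_eq_three]
  exact ⟨0, 1, -1, zero_ne_one, (neg_ne_zero.mpr one_ne_zero).symm,
    (neg_one_ne_one_of_charP_three K).symm, rfl⟩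

lemma index_range_artinSchreier [Finite K] : (artinSchreier K).range.index = 3 := by
  rw [AddSubgroup.index_range, card_ker_artinSchreier]

end CharThree

section Involution

variable {F : Type*} [Field F] (σ : F →+* F)

def fixedField : Subfield F := σ.eqLocusField (RingHom.id F)

variable {σ} in
lemma apply_coe_fixedField (u : fixedField σ) : σ u = u := u.2

def fixedFieldTrace (hσ : Function.Involutive σ) : F →+ fixedField σ where
  toFun x := ⟨x + σ x, by simp [fixedField, hσ x, add_comm]⟩
  map_zero' := by ext; simp
  map_add' x y := by ext; simp only [map_add, Subfield.coe_add]; ring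

lemma coe_fixedFieldTrace (hσ : Function.Involutive σ) (x : F) :
    (fixedFieldTrace σ hσ x : F) = x + σ x :=
  rfl

variable [CharP F 3] {i : F}

lemma fixedFieldTrace_artinSchreier (hσ : Function.Involutive σ) (x : F) :
    fixedFieldTrace σ hσ (artinSchreier F x) = artinSchreier _ (fixedFieldTrace σ hσ x) := by
  ext
  simp only [coe_fixedFieldTrace, artinSchreier_apply, map_sub, map_pow, Subfield.coe_sub,
    SubmonoidClass.coe_pow, add_pow_char]

/-- `σ` swaps `1 - i` and `1 + i`; the inverse needs no normalising factor because `4 = 1`. -/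
def equivFixedFieldProd (hσ : Function.Involutive σ) (hi : i ^ 2 = -1) (hσi : σ i = -i) :
    F ≃ fixedField σ × fixedField σ where
  toFun y := (fixedFieldTrace σ hσ ((1 - i) * y), fixedFieldTrace σ hσ ((1 + i) * y))
  invFun w := (1 + i) * w.1 + (1 - i) * w.2
  left_inv y := by
    have h3 : (3 : F) = 0 := CharP.cast_eq_zero F 3
    simp only [coe_fixedFieldTrace, map_mul, map_sub, map_add, map_one, hσi]
    linear_combination (2 * σ y - 2 * y) * hi + y * h3
  right_inv w := by
    have h3 : (3 : F) = 0 := CharP.cast_eq_zero F 3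
    ext <;> simp only [coe_fixedFieldTrace, map_mul, map_sub, map_add, map_one, hσi,
      apply_coe_fixedField]
    · linear_combination (2 * (w.2 : F) - 2 * w.1) * hi + (w.1 : F) * h3
    · linear_combination (2 * (w.1 : F) - 2 * w.2) * hi + (w.2 : F) * h3

lemma equivFixedFieldProd_fst_mul_snd (hσ : Function.Involutive σ) (hi : i ^ 2 = -1)
    (hσi : σ i = -i) (y : F) :
    (equivFixedFieldProd σ hσ hi hσi y).1 * (equivFixedFieldProd σ hσ hi hσi y).2 =
      -fixedFieldTrace σ hσ (y ^ 2) := by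
  have h3 : (3 : F) = 0 := CharP.cast_eq_zero F 3
  ext
  simp only [equivFixedFieldProd, Equiv.coe_fn_mk, Subfield.coe_mul, Subfield.coe_neg,
    coe_fixedFieldTrace, map_mul, map_sub, map_add, map_one, map_pow, hσi]
  linear_combination (2 * y * σ y - y ^ 2 - σ y ^ 2) * hi + (y ^ 2 + σ y ^ 2) * h3

lemma fixedFieldTrace_surjective (hσ : Function.Involutive σ) (hi : i ^ 2 = -1)
    (hσi : σ i = -i) :
    Function.Surjective (fixedFieldTrace σ hσ) := fun u =>
  ⟨(1 - i) * (equivFixedFieldProd σ hσ hi hσi).symm (u, 0),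
    congrArg Prod.fst ((equivFixedFieldProd σ hσ hi hσi).apply_symm_apply (u, 0))⟩

lemma card_fixedField_sq (hσ : Function.Involutive σ) (hi : i ^ 2 = -1) (hσi : σ i = -i) :
    Nat.card (fixedField σ) ^ 2 = Nat.card F := by
  rw [sq, ← Nat.card_prod, Nat.card_congr (equivFixedFieldProd σ hσ hi hσi)]

variable [Finite F]

lemma range_artinSchreier_eq_comap (hσ : Function.Involutive σ) (hi : i ^ 2 = -1)
    (hσi : σ i = -i) :
    (artinSchreier F).range =
      (artinSchreier (fixedField σ)).range.comap (fixedFieldTrace σ hσ) := by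
  have hle : (artinSchreier F).range ≤ (artinSchreier _).range.comap (fixedFieldTrace σ hσ) := by
    rintro _ ⟨x, rfl⟩
    exact ⟨_, (fixedFieldTrace_artinSchreier σ hσ x).symm⟩
  refine hle.eq_of_not_lt fun hlt => (AddSubgroup.index_strictAnti hlt).ne ?_
  rw [AddSubgroup.index_comap_of_surjective _ (fixedFieldTrace_surjective σ hσ hi hσi),
    index_range_artinSchreier, index_range_artinSchreier]

lemma card_sq_eq_cube_sub_self (hσ : Function.Involutive σ) (hi : i ^ 2 = -1)
    (hσi : σ i = -i) :
    Nat.card {p : F × F // p.2 ^ 2 = p.1 ^ 3 - p.1} =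
      Nat.card F + 2 * Nat.card (fixedField σ) := by
  set K := fixedField σ
  set P := (artinSchreier K).range
  have hP : Nat.card P * 3 = Nat.card K := by
    rw [← index_range_artinSchreier K, AddSubgroup.card_mul_index]
  have hsq : Nat.card {y : F // y ^ 2 ∈ (artinSchreier F).range} =
      Nat.card {w : K × K // w.1 * w.2 ∈ P} := by
    refine Nat.card_congr ((equivFixedFieldProd σ hσ hi hσi).subtypeEquiv fun y => ?_)
    rw [equivFixedFieldProd_fst_mul_snd, neg_mem_iff,
      range_artinSchreier_eq_comap σ hσ hi hσi, AddSubgroup.mem_comap]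
  obtain ⟨k, hk⟩ : ∃ k, Nat.card K = k + 1 := Nat.exists_eq_add_one.mpr Nat.card_pos
  calc Nat.card {p : F × F // p.2 ^ 2 = p.1 ^ 3 - p.1}
      = Nat.card {p : F × F // artinSchreier F p.1 = p.2 ^ 2} :=
        Nat.card_congr (Equiv.subtypeEquivRight fun _ => eq_comm)
    _ = 3 * (Nat.card K + (Nat.card K - 1) * Nat.card P) := by
        rw [AddMonoidHom.card_eq_card_ker_mul_card_mem_range (artinSchreier F) (· ^ 2),
          card_ker_artinSchreier, hsq, card_mul_mem_addSubgroup]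
    _ = Nat.card K ^ 2 + 2 * Nat.card K := by
        rw [hk, Nat.add_sub_cancel]
        calc 3 * (k + 1 + k * Nat.card P) = 3 * (k + 1) + k * (Nat.card P * 3) := by ring
          _ = (k + 1) ^ 2 + 2 * (k + 1) := by rw [hP, hk]; ring
    _ = Nat.card F + 2 * Nat.card K := by rw [card_fixedField_sq σ hσ hi hσi]

end Involution

theorem legendre_max_char_three_general {F : Type*} [Field F] [Fintype F]
    (n : ℕ) (hn4 : n % 4 = 2) (hq : Fintype.card F = 3 ^ n) :
    ∃ lam : F, lam ≠ 0 ∧ lam ≠ 1 ∧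
      1 + Nat.card {p : F × F // p.2 ^ 2 = p.1 * (p.1 - 1) * (p.1 - lam)} =
        3 ^ n + 1 + 2 * 3 ^ (n / 2) := by
  obtain ⟨m, rfl⟩ : ∃ m, n = 2 * m := ⟨n / 2, by omega⟩
  have h3m : 3 ^ m % 4 = 3 := by
    rw [← Nat.div_add_mod m 2, show m % 2 = 1 by omega, pow_succ, pow_mul, Nat.mul_mod,
      Nat.pow_mod]
    norm_num
  have : CharP F 3 := charP_of_card_eq_prime_pow hq
  let σ := iterateFrobenius F 3 m
  have hσ : Function.Involutive σ := fun x => by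
    rw [iterateFrobenius_def, iterateFrobenius_def, ← pow_mul, ← pow_add, ← two_mul, ← hq,
      FiniteField.pow_card]
  obtain ⟨i, hi⟩ : IsSquare (-1 : F) := FiniteField.isSquare_neg_one_iff.mpr <| by
    rw [hq, pow_mul', Nat.pow_mod, h3m]
    norm_num
  replace hi : i ^ 2 = -1 := by rw [sq, ← hi]
  have hσi : σ i = -i := pow_eq_neg_self_of_sq_eq_neg_one hi h3m
  have hK : Nat.card (fixedField σ) = 3 ^ m := by
    rw [← pow_left_inj₀ (Nat.zero_le _) (Nat.zero_le _) two_ne_zero,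
      card_fixedField_sq σ hσ hi hσi, Nat.card_eq_fintype_card, hq, pow_mul']
  refine ⟨-1, neg_ne_zero.mpr one_ne_zero, neg_one_ne_one_of_charP_three F, ?_⟩
  rw [Nat.card_congr (Equiv.subtypeEquivRight fun p => by
      rw [show p.1 * (p.1 - 1) * (p.1 - -1) = p.1 ^ 3 - p.1 by ring]),
    card_sq_eq_cube_sub_self σ hσ hi hσi, hK, Nat.card_eq_fintype_card, hq,
    Nat.mul_div_cancel_left m two_pos]
  ring

/-- For `q = 3ⁿ` with `n ≡ 2 (mod 4)`, some Legendre elliptic curve `E_λ : y² = x(x−1)(x−λ)`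
with `λ ∈ F_q \ {0,1}` attains the Hasse–Weil upper bound: `#E_λ(F_q) = q + 1 + 2·3^{n/2}`. -/
theorem legendre_max_char_three {F : Type*} [Field F] [Fintype F]
    (n : ℕ) (hn : 0 < n) (hn4 : n % 4 = 2) (hq : Fintype.card F = 3 ^ n) :
    ∃ lam : F, lam ≠ 0 ∧ lam ≠ 1 ∧
      1 + Nat.card {p : F × F // p.2 ^ 2 = p.1 * (p.1 - 1) * (p.1 - lam)} =
        3 ^ n + 1 + 2 * 3 ^ (n / 2) :=
  legendre_max_char_three_general n hn4 hq
end
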